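/- arXiv:1807.02642 — 12 statements merged into one kernel-verified Lean document; each statement's English description precedes it below -/
import Mathlib

section
/- Let M be a nonsingular n×n matrix with entries in {0,1}, and let A be the (n+1)×(n+1) matrix obtained from M by appending an (n+1)-th row (0,0,…,0,1) and an (n+1)-th column all of whose entries equal 1 (so A_{ij}=M_{ij} for 1≤i,j≤n, A_{i,n+1}=1 for all 1≤i≤n+1, and A_{n+1,j}=0 for 1≤j≤n). Then A is invertible, and writing A^{-1}=(l_{ij}), for every i=1,…,n one has ∑_{j=1}^{n+1} |l_{ij}| ≥ 2. -/
/-- For a nonsingular n×n 0/1-matrix `M`, the extended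
(n+1)×(n+1) matrix `A` (with added row (0,…,0,1) and added column of 1's)
is invertible, and every one of the first n rows of `A⁻¹ = (l_ij)`
satisfies `∑_j |l_ij| ≥ 2`. -/
theorem extended_matrix_inverse_row_abs_sum_ge_two
    (n : ℕ) (M : Matrix (Fin n) (Fin n) ℝ)
    (hM01 : ∀ i j, M i j = 0 ∨ M i j = 1)
    (hMdet : M.det ≠ 0)
    (A : Matrix (Fin (n + 1)) (Fin (n + 1)) ℝ)
    (hA : ∀ i j : Fin (n + 1), A i j =
      if hj : (j : ℕ) < n then
        (if hi : (i : ℕ) < n then M ⟨i, hi⟩ ⟨j, hj⟩ else 0)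
      else 1) :
    IsUnit A ∧ ∀ i : Fin (n + 1), (i : ℕ) < n → 2 ≤ ∑ j, |A⁻¹ i j| := by
  have hdet : A.det = M.det := by
    rw [Matrix.det_succ_row A (Fin.last n)]
    rw [Finset.sum_eq_single (Fin.last n)]
    · have hsub : A.submatrix (Fin.last n).succAbove (Fin.last n).succAbove = M := by
        ext i j
        simp only [Matrix.submatrix_apply, Fin.succAbove_last, hA,
          Fin.coe_castSucc, i.is_lt, j.is_lt, dif_pos]
      rw [hsub, hA]
      simp [pow_add, ← mul_pow]
    · intro j _ hj
      have hjn : (j : ℕ) < n := by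
        rcases lt_or_eq_of_le (Nat.lt_succ_iff.mp j.is_lt) with h | h
        · exact h
        · exact absurd (Fin.ext h : j = Fin.last n) hj
      rw [hA]
      simp [hjn]
    · simp
  have hAdet : A.det ≠ 0 := by rw [hdet]; exact hMdet
  have hU : IsUnit A := by
    rw [Matrix.isUnit_iff_isUnit_det]
    exact isUnit_iff_ne_zero.mpr hAdet
  refine ⟨hU, fun i hi => ?_⟩
  have hinv : A⁻¹ * A = 1 := Matrix.nonsing_inv_mul A (isUnit_iff_ne_zero.mpr hAdet)
  set l : Fin (n + 1) → ℝ := fun j => A⁻¹ i j with hl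
  -- sum of the row is 0
  have hsum0 : ∑ j, l j = 0 := by
    have h := congrFun (congrFun hinv i) (Fin.last n)
    simp only [Matrix.mul_apply, Matrix.one_apply] at h
    have hne : i ≠ Fin.last n := by
      intro h'; rw [h'] at hi; simp at hi
    rw [if_neg hne] at h
    have : ∀ j, A j (Fin.last n) = 1 := by
      intro j; rw [hA]; simp
    calc ∑ j, l j = ∑ j, A⁻¹ i j * A j (Fin.last n) := by
          apply Finset.sum_congr rfl; intro j _; rw [this j, mul_one]
      _ = 0 := h
  -- row i times column i of A equals 1
  have hsum1 : ∑ j, l j * A j i = 1 := by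
    have h := congrFun (congrFun hinv i) i
    simp only [Matrix.mul_apply, Matrix.one_apply, if_pos rfl] at h
    exact h
  -- each A j i is 0 or 1
  have hA01 : ∀ j, A j i = 0 ∨ A j i = 1 := by
    intro j
    rw [hA]
    rw [dif_pos hi]
    by_cases hj : (j : ℕ) < n
    · rw [dif_pos hj]; exact hM01 _ _
    · rw [dif_neg hj]; left; rfl
  -- termwise bound: l j * A j i ≤ max (l j) 0
  have hterm : ∀ j, l j * A j i ≤ max (l j) 0 := by
    intro j
    rcases hA01 j with h | h
    · rw [h, mul_zero]; exact le_max_right _ _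
    · rw [h, mul_one]; exact le_max_left _ _
  have hmax : (1 : ℝ) ≤ ∑ j, max (l j) 0 := by
    rw [← hsum1]
    exact Finset.sum_le_sum fun j _ => hterm j
  have habs : ∀ x : ℝ, |x| = 2 * max x 0 - x := by
    intro x
    rcases le_total x 0 with h | h
    · rw [max_eq_right h, abs_of_nonpos h]; ring
    · rw [max_eq_left h, abs_of_nonneg h]; ring
  calc (2 : ℝ) ≤ 2 * ∑ j, max (l j) 0 := by linarith
    _ = ∑ j, (2 * max (l j) 0 - l j) := by
        rw [Finset.sum_sub_distrib, hsum0, Finset.mul_sum]; ring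
    _ = ∑ j, |l j| := by
        apply Finset.sum_congr rfl; intro j _; rw [habs]
end

section
/- Let h_n denote the maximum of |det(M)| over all n×n matrices M with entries in {0,1}. Let M be an n×n 0/1-matrix with |det(M)| = h_n, let A be its extended (n+1)×(n+1) matrix, and write A^{-1}=(l_{ij}). Then for every i=1,…,n one has ∑_{j=1}^{n+1} |l_{ij}| = 2. -/
open Matrix BigOperators

noncomputable def extInvAux (n : ℕ) (N : Matrix (Fin n) (Fin n) ℝ) :
    Matrix (Fin (n + 1)) (Fin (n + 1)) ℝ :=
  fun p q =>
    if hp : (p : ℕ) < n then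
      if hq : (q : ℕ) < n then N ⟨p, hp⟩ ⟨q, hq⟩ else -∑ k, N ⟨p, hp⟩ k
    else if (q : ℕ) < n then 0 else 1

/-- If an n×n 0/1-matrix `M` has `|det M| = h_n` (the maximum
0/1-determinant of order n), then every one of the first n rows of the
inverse of the extended matrix `A` satisfies `∑_j |l_ij| = 2`. -/
theorem extended_matrix_inverse_row_abs_sum_eq_two_of_maxDet
    (n : ℕ) (h : ℝ)
    (hh : IsGreatest {x : ℝ | ∃ N : Matrix (Fin n) (Fin n) ℝ,
      (∀ i j, N i j = 0 ∨ N i j = 1) ∧ x = |N.det|} h)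
    (M : Matrix (Fin n) (Fin n) ℝ)
    (hM01 : ∀ i j, M i j = 0 ∨ M i j = 1)
    (hMdet : |M.det| = h)
    (A : Matrix (Fin (n + 1)) (Fin (n + 1)) ℝ)
    (hA : ∀ i j : Fin (n + 1), A i j =
      if hj : (j : ℕ) < n then
        (if hi : (i : ℕ) < n then M ⟨i, hi⟩ ⟨j, hj⟩ else 0)
      else 1) :
    ∀ i : Fin (n + 1), (i : ℕ) < n → ∑ j, |A⁻¹ i j| = 2 := by
  intro i hi
  have h1 : (1 : ℝ) ≤ h := by
    apply hh.2
    refine ⟨1, fun i j => ?_, by simp⟩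
    by_cases hij : i = j <;> simp [Matrix.one_apply, hij]
  have hd : M.det ≠ 0 := by
    intro e
    rw [e] at hMdet; simp at hMdet; linarith
  -- compute the inverse of A
  have hAB : A * extInvAux n M⁻¹ = 1 := by
    ext p q
    rw [Matrix.mul_apply, Fin.sum_univ_castSucc]
    have hAlast : A p (Fin.last n) = 1 := by
      rw [hA]; simp
    by_cases hp : (p : ℕ) < n
    · have hApk : ∀ k : Fin n, A p k.castSucc = M ⟨p, hp⟩ k := by
        intro k
        rw [hA]; simp [hp]
      by_cases hq : (q : ℕ) < n
      · have hBk : ∀ k : Fin n, extInvAux n M⁻¹ k.castSucc q = M⁻¹ k ⟨q, hq⟩ := by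
          intro k; simp [extInvAux, hq]
        have hBlast : extInvAux n M⁻¹ (Fin.last n) q = 0 := by
          simp [extInvAux, hq]
        rw [hBlast, hAlast]
        have : ∑ k : Fin n, A p k.castSucc * extInvAux n M⁻¹ k.castSucc q
            = ∑ k : Fin n, M ⟨p, hp⟩ k * M⁻¹ k ⟨q, hq⟩ := by
          refine Finset.sum_congr rfl fun k _ => ?_
          rw [hApk, hBk]
        rw [this, ← Matrix.mul_apply, Matrix.mul_nonsing_inv M (isUnit_iff_ne_zero.mpr hd)]
        have hpq : (p = q) ↔ ((⟨(p : ℕ), hp⟩ : Fin n) = ⟨(q : ℕ), hq⟩) := by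
          simp [Fin.ext_iff]
        by_cases he : p = q
        · simp [Matrix.one_apply, he, hpq.mp he]
        · simp only [Matrix.one_apply]
          rw [if_neg he, if_neg (fun hc => he (hpq.mpr hc))]
          ring
      · have hBk : ∀ k : Fin n, extInvAux n M⁻¹ k.castSucc q = -∑ m, M⁻¹ k m := by
          intro k; simp [extInvAux, hq]
        have hBlast : extInvAux n M⁻¹ (Fin.last n) q = 1 := by
          simp [extInvAux, hq]
        rw [hBlast, hAlast]
        have : ∑ k : Fin n, A p k.castSucc * extInvAux n M⁻¹ k.castSucc q
            = -∑ m : Fin n, ∑ k : Fin n, M ⟨p, hp⟩ k * M⁻¹ k m := by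
          rw [Finset.sum_comm]
          rw [← Finset.sum_neg_distrib]
          refine Finset.sum_congr rfl fun k _ => ?_
          rw [hApk, hBk, mul_neg, Finset.mul_sum]
        rw [this]
        have h2 : ∀ m : Fin n, ∑ k : Fin n, M ⟨p, hp⟩ k * M⁻¹ k m
            = (1 : Matrix (Fin n) (Fin n) ℝ) ⟨p, hp⟩ m := by
          intro m
          rw [← Matrix.mul_apply, Matrix.mul_nonsing_inv M (isUnit_iff_ne_zero.mpr hd)]
        have hpq : p ≠ q := by
          intro e; rw [e] at hp; exact hq hp
        simp only [h2]
        have h3 : ∑ m : Fin n, (1 : Matrix (Fin n) (Fin n) ℝ) ⟨(p:ℕ), hp⟩ m = 1 := by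
          simp [Matrix.one_apply]
        rw [h3, Matrix.one_apply, if_neg hpq]
        ring
    · have hApk : ∀ k : Fin n, A p k.castSucc = 0 := by
        intro k; rw [hA]; simp [hp]
      have hplast : p = Fin.last n := by
        have := p.isLt
        have : (p : ℕ) = n := by omega
        exact Fin.ext this
      simp only [hApk, zero_mul, Finset.sum_const_zero, hAlast, one_mul, zero_add]
      by_cases hq : (q : ℕ) < n
      · have : p ≠ q := by intro e; rw [e] at hp; exact hp hq
        simp [extInvAux, hq, Matrix.one_apply, this]
      · have : q = Fin.last n := by
          have := q.isLt
          exact Fin.ext (by omega)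
        simp [extInvAux, hq, hplast, this, Matrix.one_apply]
  have hAinv : A⁻¹ = extInvAux n M⁻¹ := Matrix.inv_eq_right_inv hAB
  -- key facts about the row of M⁻¹
  set i' : Fin n := ⟨(i : ℕ), hi⟩ with hi'
  set r : Fin n → ℝ := fun j => M⁻¹ i' j with hr
  have hcramer : ∀ v : Fin n → ℝ, ∑ j, r j * v j
      = (M.det)⁻¹ * (M.updateCol i' v).det := by
    intro v
    have e1 : ∑ j, r j * v j = ((M⁻¹).mulVec v) i' := by
      simp [Matrix.mulVec, dotProduct, hr]
    rw [e1, Matrix.inv_def, Matrix.smul_mulVec,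
      ← Matrix.cramer_eq_adjugate_mulVec, Pi.smul_apply, Matrix.cramer_apply]
    simp [Ring.inverse_eq_inv']
  have hbound : ∀ v : Fin n → ℝ, (∀ j, v j = 0 ∨ v j = 1) →
      |∑ j, r j * v j| ≤ 1 := by
    intro v hv
    have hN : ∀ a b, (M.updateCol i' v) a b = 0 ∨ (M.updateCol i' v) a b = 1 := by
      intro a b
      rw [Matrix.updateCol_apply]
      by_cases hb : b = i' <;> simp [hb, hv a, hM01 a b]
    have hNle : |(M.updateCol i' v).det| ≤ h :=
      hh.2 ⟨_, hN, rfl⟩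
    rw [hcramer v, abs_mul, abs_inv, hMdet]
    have hh0 : (0:ℝ) < h := by linarith
    calc h⁻¹ * |(M.updateCol i' v).det| ≤ h⁻¹ * h :=
          mul_le_mul_of_nonneg_left hNle (by positivity)
      _ = 1 := inv_mul_cancel₀ (ne_of_gt hh0)
  have hdiag : ∑ j, r j * M j i' = 1 := by
    have := Matrix.nonsing_inv_mul M (isUnit_iff_ne_zero.mpr hd)
    have e : (M⁻¹ * M) i' i' = 1 := by rw [this]; simp [Matrix.one_apply]
    rw [Matrix.mul_apply] at e
    exact e
  set pos : ℝ := ∑ j, max (r j) 0 with hpos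
  set neg : ℝ := ∑ j, max (-(r j)) 0 with hneg
  have hpos_le : pos ≤ 1 := by
    have := hbound (fun j => if 0 < r j then (1:ℝ) else 0)
      (fun j => by by_cases hj : 0 < r j <;> simp [hj])
    have e : ∑ j, r j * (if 0 < r j then (1:ℝ) else 0) = pos := by
      refine Finset.sum_congr rfl fun j _ => ?_
      rcases lt_or_ge 0 (r j) with hj | hj
      · simp [hj, max_eq_left hj.le]
      · simp [not_lt.mpr hj, max_eq_right hj]
    rw [e] at this
    have hpos_nonneg : 0 ≤ pos :=
      Finset.sum_nonneg fun j _ => le_max_right _ _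
    rwa [abs_of_nonneg hpos_nonneg] at this
  have hneg_le : neg ≤ 1 := by
    have := hbound (fun j => if r j < 0 then (1:ℝ) else 0)
      (fun j => by by_cases hj : r j < 0 <;> simp [hj])
    have e : ∑ j, r j * (if r j < 0 then (1:ℝ) else 0) = -neg := by
      rw [hneg, ← Finset.sum_neg_distrib]
      refine Finset.sum_congr rfl fun j _ => ?_
      rcases lt_or_ge (r j) 0 with hj | hj
      · simp [hj, max_eq_left (by linarith : (0:ℝ) ≤ -r j)]
      · simp [not_lt.mpr hj, max_eq_right (by linarith : -r j ≤ (0:ℝ))]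
    rw [e, abs_neg] at this
    have hneg_nonneg : 0 ≤ neg :=
      Finset.sum_nonneg fun j _ => le_max_right _ _
    rwa [abs_of_nonneg hneg_nonneg] at this
  have hpos_ge : 1 ≤ pos := by
    rw [← hdiag, hpos]
    refine Finset.sum_le_sum fun j _ => ?_
    rcases hM01 j i' with hj | hj
    · rw [hj]; simp [le_max_right]
    · rw [hj, mul_one]; exact le_max_left _ _
  have hpos_eq : pos = 1 := le_antisymm hpos_le hpos_ge
  have hneg_nonneg : 0 ≤ neg := Finset.sum_nonneg fun j _ => le_max_right _ _
  -- final computation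
  rw [hAinv, Fin.sum_univ_castSucc]
  have e1 : ∀ j : Fin n, extInvAux n M⁻¹ i j.castSucc = r j := by
    intro j; simp [extInvAux, hi, hr, hi']
  have e2 : extInvAux n M⁻¹ i (Fin.last n) = -∑ k, r k := by
    simp [extInvAux, hi, hr, hi']
  have e3 : ∑ j : Fin n, |extInvAux n M⁻¹ i j.castSucc| = pos + neg := by
    rw [hpos, hneg, ← Finset.sum_add_distrib]
    refine Finset.sum_congr rfl fun j _ => ?_
    rw [e1]
    rcases le_total (r j) 0 with hj | hj
    · rw [abs_of_nonpos hj, max_eq_right hj, max_eq_left (by linarith)]; ring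
    · rw [abs_of_nonneg hj, max_eq_left hj, max_eq_right (by linarith)]; ring
  have e4 : ∑ k, r k = pos - neg := by
    rw [hpos, hneg, ← Finset.sum_sub_distrib]
    refine Finset.sum_congr rfl fun j _ => ?_
    rcases le_total (r j) 0 with hj | hj
    · rw [max_eq_right hj, max_eq_left (by linarith)]; ring
    · rw [max_eq_left hj, max_eq_right (by linarith)]; ring
  rw [e3, e2, e4, abs_neg, abs_of_nonneg (by linarith [hpos_eq] : (0:ℝ) ≤ pos - neg)]
  linarith [hpos_eq]
end

section
/- Let h_n denote the maximum of |det(M)| over all n×n matrices M with entries in {0,1}. Let M be a nonsingular n×n 0/1-matrix, let A be its extended (n+1)×(n+1) matrix, and write A^{-1}=(l_{ij}). If for some index i∈{1,…,n} the strict inequality ∑_{j=1}^{n+1} |l_{ij}| > 2 holds, then |det(M)| < h_n. -/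
lemma det_lastRow_elast (n : ℕ) (B : Matrix (Fin (n+1)) (Fin (n+1)) ℝ)
    (h0 : ∀ j : Fin (n+1), j ≠ Fin.last n → B (Fin.last n) j = 0)
    (h1 : B (Fin.last n) (Fin.last n) = 1) :
    B.det = (B.submatrix Fin.castSucc Fin.castSucc).det := by
  rw [Matrix.det_succ_row B (Fin.last n)]
  rw [Finset.sum_eq_single (Fin.last n)]
  · simp [h1, Fin.succAbove_last, pow_add]
    rw [← mul_pow]
    norm_num
  · intro j _ hj
    simp [h0 j hj]
  · simp

/-- If `M` is a nonsingular n×n 0/1-matrix whose extended matrix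
`A` has an inverse `(l_ij)` with `∑_j |l_ij| > 2` for some row `i ≤ n`,
then `|det M| < h_n`, the maximum 0/1-determinant of order n. -/
theorem det_lt_maxDet_of_extended_inverse_row_abs_sum_gt_two
    (n : ℕ) (h : ℝ)
    (hh : IsGreatest {x : ℝ | ∃ N : Matrix (Fin n) (Fin n) ℝ,
      (∀ i j, N i j = 0 ∨ N i j = 1) ∧ x = |N.det|} h)
    (M : Matrix (Fin n) (Fin n) ℝ)
    (hM01 : ∀ i j, M i j = 0 ∨ M i j = 1)
    (hMdet : M.det ≠ 0)
    (A : Matrix (Fin (n + 1)) (Fin (n + 1)) ℝ)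
    (hA : ∀ i j : Fin (n + 1), A i j =
      if hj : (j : ℕ) < n then
        (if hi : (i : ℕ) < n then M ⟨i, hi⟩ ⟨j, hj⟩ else 0)
      else 1)
    (i : Fin (n + 1)) (hi : (i : ℕ) < n)
    (hgt : 2 < ∑ j, |A⁻¹ i j|) :
    |M.det| < h := by
  set L := A⁻¹ with hLdef
  -- basic facts about j = last
  have hlast_iff : ∀ j : Fin (n+1), j ≠ Fin.last n ↔ (j : ℕ) < n := by
    intro j
    constructor
    · intro hj; exact Fin.val_lt_last hj
    · intro hj hc; rw [hc] at hj; simp at hj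
  have hine : i ≠ Fin.last n := (hlast_iff i).mpr hi
  -- last row of A
  have hAlast0 : ∀ j : Fin (n+1), j ≠ Fin.last n → A (Fin.last n) j = 0 := by
    intro j hj
    rw [hA]
    rw [dif_pos ((hlast_iff j).mp hj), dif_neg (by simp)]
  have hAlast1 : A (Fin.last n) (Fin.last n) = 1 := by
    rw [hA]; rw [dif_neg (by simp)]
  -- last column of A
  have hAcol : ∀ j : Fin (n+1), A j (Fin.last n) = 1 := by
    intro j; rw [hA]; rw [dif_neg (by simp)]
  -- submatrix of A is M
  have hAsub : A.submatrix Fin.castSucc Fin.castSucc = M := by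
    ext k l
    simp only [Matrix.submatrix_apply]
    rw [hA]
    rw [dif_pos (by simp), dif_pos (by simp)]
    congr 1 <;> exact Fin.ext (by simp)
  have hAdet : A.det = M.det := by
    rw [det_lastRow_elast n A hAlast0 hAlast1, hAsub]
  have hAdet0 : A.det ≠ 0 := by rw [hAdet]; exact hMdet
  have hAunit : IsUnit A.det := isUnit_iff_ne_zero.mpr hAdet0
  -- row sum of L is zero
  have hLA : L * A = 1 := Matrix.nonsing_inv_mul A hAunit
  have hsum0 : ∑ j, L i j = 0 := by
    have h1 : (L * A) i (Fin.last n) = ∑ j, L i j * A j (Fin.last n) := by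
      simp [Matrix.mul_apply]
    have h2 : ((1 : Matrix (Fin (n+1)) (Fin (n+1)) ℝ)) i (Fin.last n) = 0 :=
      Matrix.one_apply_ne hine
    rw [hLA, h2] at h1
    calc ∑ j, L i j = ∑ j, L i j * A j (Fin.last n) := by
          apply Finset.sum_congr rfl; intro j _; rw [hAcol j, mul_one]
      _ = 0 := h1.symm
  -- positive and negative parts
  set Sp := ∑ j, max (L i j) 0 with hSp
  set Sn := ∑ j, max (-(L i j)) 0 with hSn
  have key1 : ∀ x : ℝ, max x 0 - max (-x) 0 = x := by
    intro x
    rcases le_total x 0 with hx | hx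
    · rw [max_eq_right hx, max_eq_left (by linarith)]; ring
    · rw [max_eq_left hx, max_eq_right (by linarith)]; ring
  have key2 : ∀ x : ℝ, max x 0 + max (-x) 0 = |x| := by
    intro x
    rcases le_total x 0 with hx | hx
    · rw [max_eq_right hx, max_eq_left (by linarith), abs_of_nonpos hx]; ring
    · rw [max_eq_left hx, max_eq_right (by linarith), abs_of_nonneg hx]; ring
  have hpm : Sp - Sn = 0 := by
    calc Sp - Sn = ∑ j, (max (L i j) 0 - max (-(L i j)) 0) := by
          rw [hSp, hSn, Finset.sum_sub_distrib]
      _ = ∑ j, L i j := Finset.sum_congr rfl (fun j _ => key1 _)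
      _ = 0 := hsum0
  have habs : Sp + Sn = ∑ j, |L i j| := by
    calc Sp + Sn = ∑ j, (max (L i j) 0 + max (-(L i j)) 0) := by
          rw [hSp, hSn, Finset.sum_add_distrib]
      _ = ∑ j, |L i j| := Finset.sum_congr rfl (fun j _ => key2 _)
  have hSp1 : 1 < Sp := by
    have : 2 < Sp + Sn := by rw [habs]; exact hgt
    nlinarith [hpm]
  -- choose the 0/1 vector v
  obtain ⟨v, hv01, hvlast, hvbig⟩ :
      ∃ v : Fin (n+1) → ℝ, (∀ j, v j = 0 ∨ v j = 1) ∧ v (Fin.last n) = 0 ∧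
        1 < |∑ j, L i j * v j| := by
    rcases le_or_gt (L i (Fin.last n)) 0 with hc | hc
    · refine ⟨fun j => if 0 < L i j then 1 else 0, fun j => by by_cases hx : 0 < L i j <;> simp [hx], ?_, ?_⟩
      · simp [not_lt.mpr hc]
      · have : ∑ j, L i j * (if 0 < L i j then (1:ℝ) else 0) = Sp := by
          rw [hSp]; apply Finset.sum_congr rfl; intro j _
          by_cases hx : 0 < L i j
          · rw [if_pos hx, mul_one, max_eq_left hx.le]
          · rw [if_neg hx, mul_zero, max_eq_right (not_lt.mp hx)]
        rw [this, abs_of_pos (by linarith)]; exact hSp1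
    · refine ⟨fun j => if L i j < 0 then 1 else 0, fun j => by by_cases hx : L i j < 0 <;> simp [hx], ?_, ?_⟩
      · simp [not_lt.mpr hc.le]
      · have : ∑ j, L i j * (if L i j < 0 then (1:ℝ) else 0) = -Sn := by
          rw [hSn, ← Finset.sum_neg_distrib]
          apply Finset.sum_congr rfl; intro j _
          by_cases hx : L i j < 0
          · rw [if_pos hx, mul_one, max_eq_left (by linarith : (0:ℝ) ≤ -(L i j)), neg_neg]
          · rw [if_neg hx, mul_zero,
              max_eq_right (by push_neg at hx; linarith : -(L i j) ≤ 0), neg_zero]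
        have hSnSp : Sn = Sp := by linarith
        rw [this, abs_neg, hSnSp, abs_of_pos (by linarith)]; exact hSp1
  -- the modified matrix
  set B := A.updateCol i v with hB
  have hBdet : B.det = A.det * ∑ j, L i j * v j := by
    have h1 : Matrix.cramer A v i = B.det := Matrix.cramer_apply A v i
    have h2 : A.det • (Matrix.mulVec A⁻¹ v) = Matrix.cramer A v :=
      Matrix.det_smul_inv_mulVec_eq_cramer A v hAunit
    have h3 : (Matrix.mulVec A⁻¹ v) i = ∑ j, L i j * v j := by
      simp [Matrix.mulVec, dotProduct, hLdef]
    have := congrFun h2 i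
    simp only [Pi.smul_apply, smul_eq_mul] at this
    rw [h3, h1] at this
    exact this.symm
  -- last row of B
  have hBlast0 : ∀ j : Fin (n+1), j ≠ Fin.last n → B (Fin.last n) j = 0 := by
    intro j hj
    rw [hB, Matrix.updateCol_apply]
    by_cases hji : j = i
    · rw [if_pos hji]; exact hvlast
    · rw [if_neg hji]; exact hAlast0 j hj
  have hBlast1 : B (Fin.last n) (Fin.last n) = 1 := by
    rw [hB, Matrix.updateCol_apply, if_neg (Ne.symm hine)]
    exact hAlast1
  set N := B.submatrix (Fin.castSucc) (Fin.castSucc) with hN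
  have hBN : B.det = N.det := det_lastRow_elast n B hBlast0 hBlast1
  -- N is a 0/1 matrix
  have hN01 : ∀ k l, N k l = 0 ∨ N k l = 1 := by
    intro k l
    rw [hN]
    simp only [Matrix.submatrix_apply]
    rw [hB, Matrix.updateCol_apply]
    by_cases hli : Fin.castSucc l = i
    · rw [if_pos hli]; exact hv01 _
    · rw [if_neg hli, hA]
      rw [dif_pos (by simpa using l.isLt), dif_pos (by simpa using k.isLt)]
      exact hM01 _ _
  -- conclude
  have hmem : |N.det| ∈ {x : ℝ | ∃ N : Matrix (Fin n) (Fin n) ℝ,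
      (∀ i j, N i j = 0 ∨ N i j = 1) ∧ x = |N.det|} := ⟨N, hN01, rfl⟩
  have hub : |N.det| ≤ h := hh.2 hmem
  have hMpos : 0 < |M.det| := abs_pos.mpr hMdet
  have : |M.det| < |N.det| := by
    rw [← hBN, hBdet, abs_mul, hAdet]
    nlinarith [hvbig, hMpos]
  linarith
end

section
/- Let g_{n+1} denote the maximum of |det(U)| over all (n+1)×(n+1) matrices U with entries in {-1,1}, and let h_n denote the maximum of |det(M)| over all n×n matrices M with entries in {0,1}. Let U be a nonsingular (n+1)×(n+1) -1/1-matrix with |det(U)| = g_{n+1}, and let T be the n×n 0/1-matrix with T_{ij} = (1 − U_{11}·U_{1,j+1}·U_{i+1,1}·U_{i+1,j+1})/2. Then |det(T)| = h_n. -/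
open Matrix in
lemma border_det_aux {n : ℕ} (B : Matrix (Fin (n+1)) (Fin (n+1)) ℝ)
    (N : Matrix (Fin n) (Fin n) ℝ)
    (h0 : ∀ j, B 0 j = 1) (hc : ∀ i : Fin n, B i.succ 0 = 1)
    (hs : ∀ i j : Fin n, B i.succ j.succ = 1 - 2 * N i j) :
    B.det = (-2 : ℝ)^n * N.det := by
  let e : Fin 1 ⊕ Fin n ≃ Fin (n+1) := finSumFinEquiv.trans (finCongr (Nat.add_comm 1 n))
  have key : B.submatrix e e =
      (fromBlocks (1 : Matrix (Fin 1) (Fin 1) ℝ) (0 : Matrix (Fin 1) (Fin n) ℝ)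
        (of fun _ _ => (1:ℝ)) (1 : Matrix (Fin n) (Fin n) ℝ)) *
      (fromBlocks (1 : Matrix (Fin 1) (Fin 1) ℝ) (of fun _ _ => (1:ℝ))
        (0 : Matrix (Fin n) (Fin 1) ℝ) ((-2 : ℝ) • N)) := by
    rw [fromBlocks_multiply]
    ext i j
    have e1 : ∀ i : Fin 1, e (Sum.inl i) = 0 := by
      intro i; simp [e, finSumFinEquiv, Fin.ext_iff]
    have e2 : ∀ j : Fin n, e (Sum.inr j) = j.succ := by
      intro j; simp [e, finSumFinEquiv, Fin.ext_iff]; try omega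
    rcases i with i | i <;> rcases j with j | j <;>
      simp [e1, e2, h0, hc, hs, fromBlocks_apply₁₁, Matrix.mul_apply, Fin.sum_univ_one,
        Matrix.one_apply, Fin.fin_one_eq_zero] <;> try ring_nf
  have : B.det = ((fromBlocks (1 : Matrix (Fin 1) (Fin 1) ℝ) (0 : Matrix (Fin 1) (Fin n) ℝ)
        (of fun _ _ => (1:ℝ)) (1 : Matrix (Fin n) (Fin n) ℝ)) *
      (fromBlocks (1 : Matrix (Fin 1) (Fin 1) ℝ) (of fun _ _ => (1:ℝ))
        (0 : Matrix (Fin n) (Fin 1) ℝ) ((-2 : ℝ) • N))).det := by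
    rw [← key, Matrix.det_submatrix_equiv_self]
  rw [this, Matrix.det_mul, det_fromBlocks_zero₁₂, det_fromBlocks_zero₂₁, Matrix.det_smul]
  simp [Fintype.card_fin]

/-- If a nonsingular (n+1)×(n+1) -1/1-matrix `U` has maximum
determinant modulus `g_{n+1}`, then its associated n×n 0/1-matrix `T`
has maximum determinant modulus `h_n`. -/
theorem abs_det_assoc_zeroOne_matrix_of_maxDet
    (n : ℕ) (g h : ℝ)
    (hg : IsGreatest {x : ℝ | ∃ W : Matrix (Fin (n + 1)) (Fin (n + 1)) ℝ,
      (∀ i j, W i j = -1 ∨ W i j = 1) ∧ x = |W.det|} g)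
    (hh : IsGreatest {x : ℝ | ∃ N : Matrix (Fin n) (Fin n) ℝ,
      (∀ i j, N i j = 0 ∨ N i j = 1) ∧ x = |N.det|} h)
    (U : Matrix (Fin (n + 1)) (Fin (n + 1)) ℝ)
    (hU : ∀ i j, U i j = -1 ∨ U i j = 1)
    (hUdet : U.det ≠ 0)
    (hUmax : |U.det| = g)
    (T : Matrix (Fin n) (Fin n) ℝ)
    (hT : ∀ i j : Fin n,
      T i j = (1 - U 0 0 * U 0 j.succ * U i.succ 0 * U i.succ j.succ) / 2) :
    |T.det| = h := by
  have hsq : ∀ i j, U i j * U i j = 1 := by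
    intro i j; rcases hU i j with h1 | h1 <;> rw [h1] <;> norm_num
  have habs : ∀ i j, |U i j| = 1 := by
    intro i j; rcases hU i j with h1 | h1 <;> rw [h1] <;> norm_num
  -- the normalized matrix V
  set V : Matrix (Fin (n+1)) (Fin (n+1)) ℝ :=
    Matrix.of (fun i j => U 0 0 * U 0 j * U i 0 * U i j) with hVdef
  have hV0 : ∀ j, V 0 j = 1 := by
    intro j
    show U 0 0 * U 0 j * U 0 0 * U 0 j = 1
    calc U 0 0 * U 0 j * U 0 0 * U 0 j = (U 0 0 * U 0 0) * (U 0 j * U 0 j) := by ring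
    _ = 1 := by rw [hsq, hsq]; norm_num
  have hVc : ∀ i : Fin n, V i.succ 0 = 1 := by
    intro i
    show U 0 0 * U 0 0 * U i.succ 0 * U i.succ 0 = 1
    calc U 0 0 * U 0 0 * U i.succ 0 * U i.succ 0
        = (U 0 0 * U 0 0) * (U i.succ 0 * U i.succ 0) := by ring
    _ = 1 := by rw [hsq, hsq]; norm_num
  have hVs : ∀ i j : Fin n, V i.succ j.succ = 1 - 2 * T i j := by
    intro i j; rw [hT]; show U 0 0 * U 0 j.succ * U i.succ 0 * U i.succ j.succ = _; ring
  have hVdet : V.det = (-2 : ℝ)^n * T.det := border_det_aux V T hV0 hVc hVs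
  -- |det V| = |det U|
  have hVU : V = Matrix.diagonal (fun i => U 0 0 * U i 0) * U *
      Matrix.diagonal (fun j => U 0 j) := by
    ext i j
    simp [hVdef, Matrix.diagonal_mul, Matrix.mul_diagonal]
    ring
  have habsV : |V.det| = |U.det| := by
    rw [hVU, Matrix.det_mul, Matrix.det_mul, Matrix.det_diagonal, Matrix.det_diagonal,
      abs_mul, abs_mul, Finset.abs_prod, Finset.abs_prod]
    have p1 : ∀ i : Fin (n+1), |U 0 0 * U i 0| = 1 := by
      intro i; rw [abs_mul, habs, habs]; norm_num
    have p2 : ∀ j : Fin (n+1), |U 0 j| = 1 := habs 0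
    simp [p1, p2]
  -- key identity
  have hkey : |U.det| = 2^n * |T.det| := by
    rw [← habsV, hVdet, abs_mul, abs_pow, abs_neg]
    norm_num
  -- T is a 0/1 matrix
  have hT01 : ∀ i j, T i j = 0 ∨ T i j = 1 := by
    intro i j
    rw [hT]
    rcases hU 0 0 with h1 | h1 <;> rcases hU 0 j.succ with h2 | h2 <;>
      rcases hU i.succ 0 with h3 | h3 <;> rcases hU i.succ j.succ with h4 | h4 <;>
      rw [h1, h2, h3, h4] <;> norm_num
  have hTle : |T.det| ≤ h := hh.2 ⟨T, hT01, rfl⟩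
  -- the other direction
  obtain ⟨N, hN01, hNeq⟩ := hh.1
  set W : Matrix (Fin (n+1)) (Fin (n+1)) ℝ :=
    Matrix.of (fun i j => Fin.cases (motive := fun _ => ℝ) 1
      (fun i' => Fin.cases (motive := fun _ => ℝ) 1 (fun j' => 1 - 2 * N i' j') j) i)
    with hWdef
  have hW0 : ∀ j, W 0 j = 1 := by intro j; simp [hWdef]
  have hWc : ∀ i : Fin n, W i.succ 0 = 1 := by intro i; simp [hWdef]
  have hWs : ∀ i j : Fin n, W i.succ j.succ = 1 - 2 * N i j := by intro i j; simp [hWdef]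
  have hWpm : ∀ i j, W i j = -1 ∨ W i j = 1 := by
    intro i j
    refine Fin.cases ?_ (fun i' => ?_) i
    · rw [hW0]; right; rfl
    · refine Fin.cases ?_ (fun j' => ?_) j
      · rw [hWc]; right; rfl
      · rw [hWs]; rcases hN01 i' j' with h1 | h1 <;> rw [h1] <;> norm_num
  have hWdet : W.det = (-2 : ℝ)^n * N.det := border_det_aux W N hW0 hWc hWs
  have hWle : |W.det| ≤ g := hg.2 ⟨W, hWpm, rfl⟩
  have hWabs : |W.det| = 2^n * |N.det| := by
    rw [hWdet, abs_mul, abs_pow, abs_neg]; norm_num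
  have hpow : (0:ℝ) < 2^n := by positivity
  have : 2^n * |N.det| ≤ 2^n * |T.det| := by
    rw [← hWabs, ← hkey, hUmax]; exact hWle
  have hle : |N.det| ≤ |T.det| := le_of_mul_le_mul_left this hpow
  exact le_antisymm hTle (hNeq ▸ hle)
end

section
/- For every n ≥ 1, g_{n+1} = 2^n · h_n, where g_{n+1} denotes the maximum of |det(U)| over all (n+1)×(n+1) matrices U with entries in {-1,1} and h_n denotes the maximum of |det(M)| over all n×n matrices M with entries in {0,1}. -/
open Matrix

/-- Border a 0/1 matrix `M` into a ±1 matrix with first row and column all ones. -/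
def borderMat {n : ℕ} (M : Matrix (Fin n) (Fin n) ℝ) :
    Matrix (Fin (n + 1)) (Fin (n + 1)) ℝ :=
  Matrix.of fun i j =>
    Fin.cases 1 (fun i' => Fin.cases 1 (fun j' => 1 - 2 * M i' j') j) i

lemma borderMat_det {n : ℕ} (M : Matrix (Fin n) (Fin n) ℝ) :
    (borderMat M).det = (-2) ^ n * M.det := by
  set B : Matrix (Fin (n + 1)) (Fin (n + 1)) ℝ :=
    Matrix.of (fun i j =>
      Fin.cases 1 (fun i' => Fin.cases 0 (fun j' => -2 * M i' j') j) i) with hB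
  have h1 : (borderMat M).det = B.det := by
    refine Matrix.det_eq_of_forall_row_eq_smul_add_const
      (fun i => if i = 0 then 0 else 1) 0 (by simp) ?_
    intro i j
    induction i using Fin.cases with
    | zero => simp [borderMat, hB]
    | succ i' =>
      induction j using Fin.cases with
      | zero => simp [borderMat, hB, Fin.succ_ne_zero]
      | succ j' => simp [borderMat, hB, Fin.succ_ne_zero]; ring
  have h2 : B.det = (-2) ^ n * M.det := by
    rw [Matrix.det_succ_column_zero]
    have hcol : ∀ i : Fin (n+1), B i 0 = if i = 0 then 1 else 0 := by
      intro i
      induction i using Fin.cases with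
      | zero => simp [hB]
      | succ i' => simp [hB, Fin.succ_ne_zero]
    rw [Finset.sum_eq_single 0]
    · have hsub : B.submatrix (Fin.succAbove 0) Fin.succ = (-2 : ℝ) • M := by
        ext i j
        simp [hB, Fin.succAbove_zero, Matrix.submatrix_apply]
      have hds : ((-2 : ℝ) • M).det = (-2) ^ n * M.det := by
        rw [Matrix.det_smul, Fintype.card_fin]
      rw [hsub, hds, hcol 0, if_pos rfl]
      simp
    · intro i _ hi
      rw [hcol i, if_neg hi]; ring
    · simp
  rw [h1, h2]

/-- For every `n ≥ 1`, `g_{n+1} = 2^n · h_n`, where `g_{n+1}` is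
the maximum modulus of a -1/1-determinant of order n+1 and `h_n` is the
maximum modulus of a 0/1-determinant of order n. -/
theorem maxDet_plusMinusOne_eq_two_pow_mul_maxDet_zeroOne
    (n : ℕ) (hn : 1 ≤ n) (g h : ℝ)
    (hg : IsGreatest {x : ℝ | ∃ W : Matrix (Fin (n + 1)) (Fin (n + 1)) ℝ,
      (∀ i j, W i j = -1 ∨ W i j = 1) ∧ x = |W.det|} g)
    (hh : IsGreatest {x : ℝ | ∃ N : Matrix (Fin n) (Fin n) ℝ,
      (∀ i j, N i j = 0 ∨ N i j = 1) ∧ x = |N.det|} h) :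
    g = 2 ^ n * h := by
  obtain ⟨⟨W, hW, hgW⟩, hgub⟩ := hg
  obtain ⟨⟨N, hN, hhN⟩, hhub⟩ := hh
  have h2n : |(-2 : ℝ) ^ n| = 2 ^ n := by
    rw [abs_pow]; norm_num
  -- g ≥ 2^n * h
  have hge : 2 ^ n * h ≤ g := by
    have hent : ∀ i j, (borderMat N) i j = -1 ∨ (borderMat N) i j = 1 := by
      intro i j
      induction i using Fin.cases with
      | zero => right; simp [borderMat]
      | succ i' =>
        induction j using Fin.cases with
        | zero => right; simp [borderMat]
        | succ j' =>
          rcases hN i' j' with h0 | h0 <;> simp [borderMat, h0] <;> norm_num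
    have := hgub ⟨borderMat N, hent, rfl⟩
    calc 2 ^ n * h = |(borderMat N).det| := by
          rw [borderMat_det, abs_mul, h2n, hhN]
      _ ≤ g := this
  -- g ≤ 2^n * h
  have hle : g ≤ 2 ^ n * h := by
    -- normalize W
    set d : Fin (n+1) → ℝ := fun i => W i 0 * W 0 0 with hd
    set e : Fin (n+1) → ℝ := fun j => W 0 j with he
    set A : Matrix (Fin (n+1)) (Fin (n+1)) ℝ :=
      Matrix.diagonal d * W * Matrix.diagonal e with hA
    have hsq : ∀ i j, W i j * W i j = 1 := by
      intro i j; rcases hW i j with h0 | h0 <;> rw [h0] <;> norm_num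
    have hAapp : ∀ i j, A i j = d i * W i j * e j := by
      intro i j
      rw [hA, Matrix.mul_diagonal, Matrix.diagonal_mul]
    have hA0 : ∀ j, A 0 j = 1 := by
      intro j
      rw [hAapp]; simp only [hd, he]
      rw [show W 0 0 * W 0 0 * W 0 j * W 0 j = (W 0 0 * W 0 0) * (W 0 j * W 0 j) by ring,
        hsq, hsq]; norm_num
    have hAc0 : ∀ i, A i 0 = 1 := by
      intro i
      rw [hAapp]; simp only [hd, he]
      rw [show W i 0 * W 0 0 * W i 0 * W 0 0 = (W i 0 * W i 0) * (W 0 0 * W 0 0) by ring,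
        hsq, hsq]; norm_num
    have hAent : ∀ i j, A i j = -1 ∨ A i j = 1 := by
      intro i j
      rw [hAapp]; simp only [hd, he]
      rcases hW i 0 with h1 | h1 <;> rcases hW 0 0 with h2 | h2 <;>
        rcases hW 0 j with h3 | h3 <;> rcases hW i j with h4 | h4 <;>
        rw [h1, h2, h3, h4] <;> norm_num
    -- define M
    set M : Matrix (Fin n) (Fin n) ℝ :=
      Matrix.of (fun i j => (1 - A i.succ j.succ) / 2) with hM
    have hMent : ∀ i j, M i j = 0 ∨ M i j = 1 := by
      intro i j
      rcases hAent i.succ j.succ with h0 | h0 <;> [right; left] <;>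
        simp [hM, h0] <;> norm_num
    have hAB : A = borderMat M := by
      ext i j
      induction i using Fin.cases with
      | zero => simp [borderMat, hA0]
      | succ i' =>
        induction j using Fin.cases with
        | zero => simp [borderMat, hAc0]
        | succ j' => simp [borderMat, hM]; ring
    have hdetA : |A.det| = |W.det| := by
      rw [hA, Matrix.det_mul, Matrix.det_mul, Matrix.det_diagonal, Matrix.det_diagonal,
        abs_mul, abs_mul, Finset.abs_prod, Finset.abs_prod]
      have hd1 : ∀ i : Fin (n+1), |d i| = 1 := by
        intro i; simp only [hd]
        rcases hW i 0 with h1 | h1 <;> rcases hW 0 0 with h2 | h2 <;>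
          rw [h1, h2] <;> norm_num
      have he1 : ∀ j : Fin (n+1), |e j| = 1 := by
        intro j; simp only [he]
        rcases hW 0 j with h1 | h1 <;> rw [h1] <;> norm_num
      simp [hd1, he1]
    have hMh : |M.det| ≤ h := hhub ⟨M, hMent, rfl⟩
    calc g = |W.det| := hgW
      _ = |A.det| := hdetA.symm
      _ = 2 ^ n * |M.det| := by rw [hAB, borderMat_det, abs_mul, h2n]
      _ ≤ 2 ^ n * h := by
          have : (0:ℝ) ≤ 2 ^ n := by positivity
          nlinarith [hMh]
  linarith
end

section
/- For every n ≥ 1, h_n = n! · ν_n, where h_n denotes the maximum of |det(M)| over all n×n matrices M with entries in {0,1}, and ν_n denotes the maximum Lebesgue volume of an n-dimensional simplex (the convex hull of n+1 affinely independent points of ℝⁿ) contained in the unit cube Q_n = [0,1]^n. -/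
open MeasureTheory Set Pointwise


noncomputable def sgnMap (n : ℕ) (ε : Fin n → Bool) : (Fin n → ℝ) →ₗ[ℝ] (Fin n → ℝ) :=
  Matrix.toLin' (Matrix.diagonal fun i => if ε i then (1:ℝ) else -1)

lemma sgnMap_apply (n : ℕ) (ε : Fin n → Bool) (x : Fin n → ℝ) (i : Fin n) :
    sgnMap n ε x i = (if ε i then (1:ℝ) else -1) * x i := by
  simp [sgnMap, Matrix.toLin'_apply, Matrix.mulVec_diagonal]

lemma sgnMap_det (n : ℕ) (ε : Fin n → Bool) : |LinearMap.det (sgnMap n ε)| = 1 := by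
  rw [sgnMap, LinearMap.det_toLin', Matrix.det_diagonal, Finset.abs_prod]
  simp [apply_ite]

def orthPiece (n : ℕ) (ε : Fin n → Bool) : Set (Fin n → ℝ) :=
  {x | (∑ i, |x i| < 1) ∧ ∀ i, if ε i then 0 ≤ x i else x i ≤ 0}

lemma sgnMap_invol (n : ℕ) (ε : Fin n → Bool) (x : Fin n → ℝ) :
    sgnMap n ε (sgnMap n ε x) = x := by
  funext i
  rw [sgnMap_apply, sgnMap_apply]
  rcases ε i <;> simp

lemma orthPiece_eq_image (n : ℕ) (ε : Fin n → Bool) :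
    orthPiece n ε = sgnMap n ε '' (orthPiece n (fun _ => true)) := by
  ext x
  constructor
  · intro ⟨h1, h2⟩
    refine ⟨sgnMap n ε x, ⟨?_, ?_⟩, sgnMap_invol n ε x⟩
    · calc ∑ i, |sgnMap n ε x i| = ∑ i, |x i| := by
            refine Finset.sum_congr rfl fun i _ => ?_
            rw [sgnMap_apply]; rcases ε i <;> simp
        _ < 1 := h1
    · intro i
      have := h2 i
      rw [sgnMap_apply]
      rcases hi : ε i <;> simp [hi] at this ⊢ <;> linarith
  · rintro ⟨y, ⟨h1, h2⟩, rfl⟩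
    constructor
    · calc ∑ i, |sgnMap n ε y i| = ∑ i, |y i| := by
            refine Finset.sum_congr rfl fun i _ => ?_
            rw [sgnMap_apply]; rcases ε i <;> simp
        _ < 1 := h1
    · intro i
      have := h2 i
      simp only [if_true] at this
      rw [sgnMap_apply]
      rcases ε i <;> simp <;> linarith

lemma measurable_orthPiece (n : ℕ) (ε : Fin n → Bool) : MeasurableSet (orthPiece n ε) := by
  have hsum : Measurable fun x : Fin n → ℝ => ∑ i, |x i| :=
    Finset.measurable_sum _ fun i _ => (measurable_pi_apply i).abs
  rw [show orthPiece n ε = {x : Fin n → ℝ | ∑ i, |x i| < 1}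
      ∩ {x : Fin n → ℝ | ∀ i, if ε i then 0 ≤ x i else x i ≤ 0} from rfl]
  apply MeasurableSet.inter
  · exact measurableSet_lt hsum measurable_const
  · rw [Set.setOf_forall]
    refine MeasurableSet.iInter fun i => ?_
    rcases ε i <;> simp only [if_true, if_false, Bool.false_eq_true]
    · exact measurableSet_le (measurable_pi_apply i) measurable_const
    · exact measurableSet_le measurable_const (measurable_pi_apply i)


lemma hyperplane_null (n : ℕ) (i : Fin n) : volume {x : Fin n → ℝ | x i = 0} = 0 := by
  have h : {x : Fin n → ℝ | x i = 0}
      = (LinearMap.ker (LinearMap.proj (R := ℝ) (φ := fun _ : Fin n => ℝ) i) : Set _) := rfl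
  rw [h]
  refine Measure.addHaar_submodule _ _ (fun H => ?_)
  have h1 : (Pi.single i 1 : Fin n → ℝ) ∈
      LinearMap.ker (LinearMap.proj (R := ℝ) (φ := fun _ : Fin n => ℝ) i) := H ▸ Submodule.mem_top
  simp [LinearMap.mem_ker] at h1


lemma cover (n : ℕ) : {x : Fin n → ℝ | ∑ i, |x i| < 1} = ⋃ ε : Fin n → Bool, orthPiece n ε := by
  ext x
  simp only [Set.mem_iUnion, Set.mem_setOf_eq]
  constructor
  · intro hx
    exact ⟨fun i => decide (0 ≤ x i), hx, fun i => by
      by_cases h : 0 ≤ x i <;> simp [h] <;> linarith⟩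
  · rintro ⟨ε, hx, -⟩; exact hx

lemma aedisj (n : ℕ) : Pairwise (Function.onFun (AEDisjoint volume) (orthPiece n ·)) := by
  intro ε ε' hne
  have : ∃ i, ε i ≠ ε' i := by
    by_contra hc
    push_neg at hc
    exact hne (funext hc)
  obtain ⟨i, hi⟩ := this
  refine measure_mono_null (fun x ⟨⟨_, h1⟩, ⟨_, h2⟩⟩ => ?_) (hyperplane_null n i)
  have e1 := h1 i; have e2 := h2 i
  show x i = 0
  rcases hε : ε i <;> rcases hε' : ε' i <;>
    simp [hε, hε'] at e1 e2 hi <;> linarith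

lemma crosspoly_vol (n : ℕ) : volume {x : Fin n → ℝ | ∑ i, |x i| < 1}
    = ENNReal.ofReal (2 ^ n / n.factorial) := by
  have := MeasureTheory.volume_sum_rpow_lt_one (Fin n) (p := 1) le_rfl
  simp only [Real.rpow_one, Fintype.card_fin] at this
  rw [this]
  congr 1
  rw [show ((1:ℝ) / 1 + 1) = (1:ℕ) + 1 by norm_num,
    show ((n : ℝ) / 1 + 1) = (n : ℝ) + 1 by ring,
    Real.Gamma_nat_eq_factorial, Real.Gamma_nat_eq_factorial]
  norm_num


lemma orthTrue_vol (n : ℕ) :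
    volume (orthPiece n (fun _ => true)) = ENNReal.ofReal (1 / n.factorial) := by
  have hU : volume {x : Fin n → ℝ | ∑ i, |x i| < 1}
      = ∑' ε : Fin n → Bool, volume (orthPiece n ε) := by
    rw [cover n]
    exact measure_iUnion₀ (aedisj n) fun ε => (measurable_orthPiece n ε).nullMeasurableSet
  have heq : ∀ ε : Fin n → Bool, volume (orthPiece n ε) = volume (orthPiece n (fun _ => true)) := by
    intro ε
    rw [orthPiece_eq_image n ε, Measure.addHaar_image_linearMap, sgnMap_det, ENNReal.ofReal_one,
      one_mul]
  rw [crosspoly_vol n, tsum_fintype] at hU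
  simp only [heq] at hU
  rw [Finset.sum_const, Finset.card_univ, Fintype.card_fun, Fintype.card_bool, Fintype.card_fin,
    nsmul_eq_mul] at hU
  have h2 : ENNReal.ofReal ((2:ℝ) ^ n / n.factorial)
      = (2 ^ n : ℕ) * ENNReal.ofReal (1 / n.factorial) := by
    rw [div_eq_mul_one_div, ENNReal.ofReal_mul (by positivity)]
    congr 1
    rw [ENNReal.ofReal_pow (by norm_num)]
    norm_num
  rw [h2] at hU
  exact (ENNReal.mul_right_inj (Nat.cast_ne_zero.mpr (by positivity))
    (ENNReal.natCast_ne_top _)).mp hU.symm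

lemma sumone_null (n : ℕ) (hn : 1 ≤ n) : volume {x : Fin n → ℝ | ∑ i, x i = 1} = 0 := by
  classical
  set l : (Fin n → ℝ) →ₗ[ℝ] ℝ := ∑ i, LinearMap.proj i with hl
  have hl_apply : ∀ x : Fin n → ℝ, l x = ∑ i, x i := by
    intro x
    simp [hl, LinearMap.sum_apply]
  have i0 : Fin n := ⟨0, hn⟩
  have hker : volume (LinearMap.ker l : Set (Fin n → ℝ)) = 0 := by
    refine Measure.addHaar_submodule _ _ (fun H => ?_)
    have h1 : (Pi.single i0 1 : Fin n → ℝ) ∈ LinearMap.ker l := H ▸ Submodule.mem_top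
    rw [LinearMap.mem_ker, hl_apply] at h1
    rw [Finset.sum_pi_single'] at h1
    simp at h1
  have hset : {x : Fin n → ℝ | ∑ i, x i = 1}
      = (· + (-(Pi.single i0 1 : Fin n → ℝ))) ⁻¹' (LinearMap.ker l : Set (Fin n → ℝ)) := by
    ext x
    simp only [Set.mem_preimage, SetLike.mem_coe, LinearMap.mem_ker, hl_apply, Set.mem_setOf_eq]
    rw [show ∀ y : Fin n → ℝ, (∑ i, (x + -y) i) = ∑ i, x i - ∑ i, y i from fun y => by
      simp [sub_eq_add_neg, Finset.sum_add_distrib]]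
    rw [Finset.sum_pi_single']
    simp only [Finset.mem_univ, if_true]
    constructor <;> intro hx <;> linarith
  rw [hset, measure_preimage_add_right, hker]

def corner (n : ℕ) : Set (Fin n → ℝ) := {x | (∀ i, 0 ≤ x i) ∧ ∑ i, x i ≤ 1}

lemma corner_vol (n : ℕ) (hn : 1 ≤ n) :
    volume (corner n) = ENNReal.ofReal (1 / n.factorial) := by
  apply le_antisymm
  · have hsub : corner n ⊆ orthPiece n (fun _ => true) ∪ {x : Fin n → ℝ | ∑ i, x i = 1} := by
      rintro x ⟨hx0, hx1⟩
      rcases lt_or_eq_of_le hx1 with h | h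
      · left
        refine ⟨?_, fun i => by simp [hx0 i]⟩
        calc ∑ i, |x i| = ∑ i, x i := Finset.sum_congr rfl fun i _ => abs_of_nonneg (hx0 i)
          _ < 1 := h
      · right; exact h
    calc volume (corner n) ≤ volume (orthPiece n (fun _ => true))
            + volume {x : Fin n → ℝ | ∑ i, x i = 1} :=
          le_trans (measure_mono hsub) (measure_union_le _ _)
      _ = ENNReal.ofReal (1 / n.factorial) := by
          rw [sumone_null n hn, add_zero, orthTrue_vol]
  · rw [← orthTrue_vol]
    refine measure_mono (fun x ⟨h1, h2⟩ => ?_)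
    refine ⟨fun i => by simpa using h2 i, le_of_lt ?_⟩
    calc ∑ i, x i ≤ ∑ i, |x i| := Finset.sum_le_sum fun i _ => le_abs_self _
      _ < 1 := h1



noncomputable def stdPts (n : ℕ) : Fin (n + 1) → (Fin n → ℝ) :=
  Fin.cons 0 (fun i => Pi.single i 1)

lemma convex_corner (n : ℕ) : Convex ℝ (corner n) := by
  have h1 : corner n = (⋂ i, {x : Fin n → ℝ | 0 ≤ x i}) ∩ {x : Fin n → ℝ | ∑ i, x i ≤ 1} := by
    ext x; simp [corner, Set.mem_iInter]
  rw [h1]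
  refine Convex.inter (convex_iInter fun i => ?_) ?_
  · have : {x : Fin n → ℝ | 0 ≤ x i}
        = (LinearMap.proj (R := ℝ) (φ := fun _ : Fin n => ℝ) i) ⁻¹' (Set.Ici 0) := rfl
    rw [this]
    exact (convex_Ici (0:ℝ)).linear_preimage _
  · set l : (Fin n → ℝ) →ₗ[ℝ] ℝ := ∑ i, LinearMap.proj i with hl
    have : {x : Fin n → ℝ | ∑ i, x i ≤ 1} = l ⁻¹' (Set.Iic 1) := by
      ext x; simp [hl, LinearMap.sum_apply]
    rw [this]
    exact (convex_Iic (1:ℝ)).linear_preimage _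

lemma hull_stdPts (n : ℕ) : convexHull ℝ (Set.range (stdPts n)) = corner n := by
  apply Subset.antisymm
  · refine convexHull_min ?_ (convex_corner n)
    rintro - ⟨i, rfl⟩
    refine Fin.cases ?_ (fun i => ?_) i
    · exact ⟨fun _ => le_rfl, by simp [stdPts]⟩
    · constructor
      · intro j
        simp [stdPts, Fin.cons_succ, Pi.single_apply]
        positivity
      · simp [stdPts, Finset.sum_pi_single']
  · intro x ⟨hx0, hx1⟩
    have key : x = Finset.univ.centerMass (Fin.cons (1 - ∑ i, x i) x : Fin (n+1) → ℝ) (stdPts n) := by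
      rw [Finset.centerMass]
      rw [show (∑ i ∈ Finset.univ, (Fin.cons (1 - ∑ i, x i) x : Fin (n+1) → ℝ) i) = 1 by
        rw [Fin.sum_univ_succ]; simp]
      rw [inv_one, one_smul, Fin.sum_univ_succ]
      simp only [Fin.cons_zero, Fin.cons_succ, stdPts, smul_zero, zero_add]
      funext j
      simp only [Finset.sum_apply, Pi.smul_apply, Pi.single_apply, smul_eq_mul]
      rw [Finset.sum_congr rfl (fun i _ => by rw [mul_ite, mul_one, mul_zero])]
      simp [Finset.sum_ite_eq']
    rw [key]
    refine Finset.centerMass_mem_convexHull _ ?_ ?_ ?_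
    · intro i _
      refine Fin.cases ?_ (fun j => ?_) i
      · simp; linarith
      · simp [hx0 j]
    · rw [show (∑ i ∈ Finset.univ, (Fin.cons (1 - ∑ i, x i) x : Fin (n+1) → ℝ) i) = 1 by
        rw [Fin.sum_univ_succ]; simp]
      norm_num
    · exact fun i _ => Set.mem_range_self i

noncomputable def affM (n : ℕ) (x0 : Fin n → ℝ) (M : (Fin n → ℝ) →ₗ[ℝ] (Fin n → ℝ)) :
    (Fin n → ℝ) →ᵃ[ℝ] (Fin n → ℝ) where
  toFun := fun t => x0 + M t
  linear := M
  map_vadd' := fun p v => by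
    simp only [map_add, vadd_eq_add]
    abel

lemma vol_hull (n : ℕ) (hn : 1 ≤ n) (x : Fin (n + 1) → Fin n → ℝ) :
    volume (convexHull ℝ (Set.range x)) =
      ENNReal.ofReal (|(Matrix.of fun i j => x i.succ j - x 0 j).det| / n.factorial) := by
  classical
  set D : Matrix (Fin n) (Fin n) ℝ := Matrix.of fun i j => x i.succ j - x 0 j with hD
  set M : (Fin n → ℝ) →ₗ[ℝ] (Fin n → ℝ) := Matrix.toLin' D.transpose with hM
  set A := affM n (x 0) M with hA
  have hxp : x = A ∘ stdPts n := by
    funext i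
    refine Fin.cases ?_ (fun i => ?_) i
    · show x 0 = x 0 + M (stdPts n 0)
      simp [stdPts]
    · show x i.succ = x 0 + M (stdPts n i.succ)
      funext j
      have : M (stdPts n i.succ) j = D i j := by
        simp [hM, stdPts, Matrix.toLin'_apply, Matrix.mulVec_single]
      simp only [Pi.add_apply, this, hD]
      simp
  have himg : convexHull ℝ (Set.range x) = A '' corner n := by
    rw [hxp, Set.range_comp, ← AffineMap.image_convexHull, hull_stdPts]
  have himg2 : A '' corner n = x 0 +ᵥ (M '' corner n) := by
    rw [← Set.image_vadd, Set.image_image]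
    rfl
  rw [himg, himg2, measure_vadd, Measure.addHaar_image_linearMap, corner_vol n hn]
  rw [hM, LinearMap.det_toLin', Matrix.det_transpose]
  rw [← ENNReal.ofReal_mul (abs_nonneg _)]
  congr 1
  field_simp


lemma det_interp_row {n : ℕ} (A : Matrix (Fin n) (Fin n) ℝ) (i : Fin n) (u w : Fin n → ℝ) (t : ℝ) :
    (A.updateRow i (u + t • w)).det
      = (1 - t) * (A.updateRow i u).det + t * (A.updateRow i (u + w)).det := by
  rw [Matrix.det_updateRow_add, Matrix.det_updateRow_add, Matrix.det_updateRow_smul]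
  ring

lemma det_interp_col {n : ℕ} (A : Matrix (Fin n) (Fin n) ℝ) (i : Fin n) (u w : Fin n → ℝ) (t : ℝ) :
    (A.updateCol i (u + t • w)).det
      = (1 - t) * (A.updateCol i u).det + t * (A.updateCol i (u + w)).det := by
  rw [Matrix.det_updateCol_add, Matrix.det_updateCol_add, Matrix.det_updateCol_smul]
  ring

lemma abs_interp {a b t : ℝ} (ht : t ∈ Set.Icc (0:ℝ) 1) {h : ℝ} (ha : |a| ≤ h) (hb : |b| ≤ h) :
    |(1 - t) * a + t * b| ≤ h := by
  obtain ⟨h0, h1⟩ := ht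
  calc |(1-t)*a + t*b| ≤ |(1-t)*a| + |t*b| := abs_add_le _ _
    _ = (1-t)*|a| + t*|b| := by
        rw [abs_mul, abs_mul, abs_of_nonneg (by linarith : (0:ℝ) ≤ 1 - t), abs_of_nonneg h0]
    _ ≤ (1-t)*h + t*h := by
        have := abs_nonneg a
        have := abs_nonneg b
        nlinarith
    _ = h := by ring

lemma det_bound_01 {n : ℕ} {h : ℝ}
    (hub : ∀ N : Matrix (Fin n) (Fin n) ℝ, (∀ i j, N i j = 0 ∨ N i j = 1) → |N.det| ≤ h)
    (v : Fin (n + 1) → Fin n → ℝ) (hv : ∀ i j, v i j = 0 ∨ v i j = 1) :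
    |(Matrix.of fun i j => v i.succ j - v 0 j).det| ≤ h := by
  classical
  set c : Fin n → ℝ := fun j => if v 0 j = 1 then -1 else 1 with hc
  set N : Matrix (Fin n) (Fin n) ℝ :=
    Matrix.of fun i j => if v 0 j = 1 then 1 - v i.succ j else v i.succ j with hNdef
  have hN01 : ∀ i j, N i j = 0 ∨ N i j = 1 := by
    intro i j
    rcases hv i.succ j with h1 | h1 <;> rcases hv 0 j with h2 | h2 <;>
      simp [hNdef, h1, h2]
  have hNeq : N = (Matrix.of fun i j => v i.succ j - v 0 j) * Matrix.diagonal c := by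
    ext i j
    rw [Matrix.mul_diagonal]
    rcases hv 0 j with h0 | h0 <;> simp [hNdef, hc, h0] <;> ring
  have hle := hub N hN01
  rw [hNeq, Matrix.det_mul, Matrix.det_diagonal, abs_mul, Finset.abs_prod] at hle
  have hprod : (∏ j, |c j|) = 1 := by
    apply Finset.prod_eq_one
    intro j _
    by_cases h2 : v 0 j = 1 <;> simp [hc, h2]
  rwa [hprod, mul_one] at hle

lemma det_bound {n : ℕ} {h : ℝ}
    (hub : ∀ N : Matrix (Fin n) (Fin n) ℝ, (∀ i j, N i j = 0 ∨ N i j = 1) → |N.det| ≤ h)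
    (v : Fin (n + 1) → Fin n → ℝ) (hv : ∀ i j, v i j ∈ Set.Icc (0:ℝ) 1) :
    |(Matrix.of fun i j => v i.succ j - v 0 j).det| ≤ h := by
  classical
  suffices H : ∀ S : Finset (Fin (n+1) × Fin n), ∀ v : Fin (n+1) → Fin n → ℝ,
      (∀ i j, v i j ∈ Set.Icc (0:ℝ) 1) →
      (∀ p : Fin (n+1) × Fin n, p ∉ S → v p.1 p.2 = 0 ∨ v p.1 p.2 = 1) →
      |(Matrix.of fun i j => v i.succ j - v 0 j).det| ≤ h from
    H Finset.univ v hv (fun p hp => absurd (Finset.mem_univ p) hp)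
  intro S
  induction S using Finset.induction_on with
  | empty =>
    intro v hv h01
    exact det_bound_01 hub v (fun i j => h01 (i, j) (Finset.notMem_empty _))
  | @insert p S hpS IH =>
    intro v hv h01
    set w : ℝ → (Fin (n+1) → Fin n → ℝ) :=
      fun c => Function.update v p.1 (Function.update (v p.1) p.2 c) with hw
    have hw_eval : ∀ c i j, w c i j = if i = p.1 ∧ j = p.2 then c else v i j := by
      intro c i j
      by_cases hi : i = p.1
      · subst hi
        rw [hw]
        simp only [Function.update_self]
        by_cases hj : j = p.2
        · subst hj; simp
        · simp [Function.update_apply, hj]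
      · simp [hw, Function.update_apply, hi]
    have hwt : w (v p.1 p.2) = v := by
      rw [hw]
      simp
    have hcond : ∀ c : ℝ, c = 0 ∨ c = 1 → (∀ i j, w c i j ∈ Set.Icc (0:ℝ) 1) ∧
        (∀ q : Fin (n+1) × Fin n, q ∉ S → w c q.1 q.2 = 0 ∨ w c q.1 q.2 = 1) := by
      intro c hc
      constructor
      · intro i j
        rw [hw_eval]
        split
        · rcases hc with rfl | rfl <;> norm_num
        · exact hv i j
      · intro q hq
        rw [hw_eval]
        by_cases hqp : q.1 = p.1 ∧ q.2 = p.2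
        · rw [if_pos hqp]; exact hc
        · rw [if_neg hqp]
          refine h01 q (fun hmem => ?_)
          rcases Finset.mem_insert.mp hmem with heq | hmm
          · exact hqp ⟨by rw [heq], by rw [heq]⟩
          · exact hq hmm
    set A : Matrix (Fin n) (Fin n) ℝ := Matrix.of fun i j => v i.succ j - v 0 j with hA
    have key : ∀ t : ℝ, (Matrix.of fun i j => w t i.succ j - w t 0 j).det
        = (1 - t) * (Matrix.of fun i j => w 0 i.succ j - w 0 0 j).det
          + t * (Matrix.of fun i j => w 1 i.succ j - w 1 0 j).det := by
      intro t
      rcases Fin.eq_zero_or_eq_succ p.1 with hp0 | ⟨q, hq⟩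
      · -- column case
        set u : Fin n → ℝ := fun i => v i.succ p.2 with hu
        set m : Fin n → ℝ := fun _ => (-1 : ℝ) with hm
        have hC : ∀ c : ℝ, (Matrix.of fun i j => w c i.succ j - w c 0 j)
            = A.updateCol p.2 (u + c • m) := by
          intro c
          ext i j
          simp only [Matrix.of_apply, hw_eval, Matrix.updateCol_apply, Pi.add_apply,
            Pi.smul_apply, smul_eq_mul, hu, hm, hA, hp0]
          by_cases hj : j = p.2 <;>
            simp [hj, Fin.succ_ne_zero] <;> ring
        rw [hC t, hC 0, hC 1, det_interp_col]
        simp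
      · -- row case
        set u : Fin n → ℝ := Function.update (A q) p.2 (-(v 0 p.2)) with hu
        set m : Fin n → ℝ := Pi.single p.2 1 with hm
        have hR : ∀ c : ℝ, (Matrix.of fun i j => w c i.succ j - w c 0 j)
            = A.updateRow q (u + c • m) := by
          intro c
          ext i j
          simp only [Matrix.of_apply, hw_eval, Matrix.updateRow_apply, Pi.add_apply,
            Pi.smul_apply, smul_eq_mul, hu, hm, Function.update_apply, Pi.single_apply, hA, hq]
          by_cases hi : i = q <;> by_cases hj : j = p.2 <;>
            simp [hi, hj, Fin.succ_inj, (Fin.succ_ne_zero q).symm,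
              show (0 : Fin (n+1)) ≠ q.succ from (Fin.succ_ne_zero q).symm] <;> ring
        rw [hR t, hR 0, hR 1, det_interp_row]
        simp
    have hkey := key (v p.1 p.2)
    rw [hwt] at hkey
    rw [hkey]
    have h0 := hcond 0 (Or.inl rfl)
    have h1 := hcond 1 (Or.inr rfl)
    exact abs_interp (hv p.1 p.2) (IH _ h0.1 h0.2) (IH _ h1.1 h1.2)


lemma affind {n : ℕ} (N : Matrix (Fin n) (Fin n) ℝ) (hdet : N.det ≠ 0) :
    AffineIndependent ℝ (Fin.cons 0 (fun i => N i) : Fin (n + 1) → (Fin n → ℝ)) := by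
  classical
  set x : Fin (n + 1) → (Fin n → ℝ) := Fin.cons 0 (fun i => N i) with hx
  rw [affineIndependent_iff_linearIndependent_vsub ℝ x 0]
  let e : Fin n ≃ {i : Fin (n + 1) // i ≠ 0} :=
    { toFun := fun i => ⟨i.succ, Fin.succ_ne_zero i⟩
      invFun := fun i => (i : Fin (n+1)).pred i.2
      left_inv := fun i => by simp
      right_inv := fun i => Subtype.ext (Fin.succ_pred _ i.2) }
  have hcomp : ((fun (i : {i : Fin (n + 1) // i ≠ 0}) => x ↑i -ᵥ x 0) ∘ e) = fun i => N i := by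
    funext i
    show x i.succ -ᵥ x 0 = N i
    rw [hx, Fin.cons_succ, Fin.cons_zero]
    simp
  have hrows : LinearIndependent ℝ fun i => N i :=
    Matrix.linearIndependent_rows_iff_isUnit.mpr
      ((Matrix.isUnit_iff_isUnit_det N).mpr (isUnit_iff_ne_zero.mpr hdet))
  rw [← linearIndependent_equiv e, hcomp]
  exact hrows



set_option maxHeartbeats 1000000 in
/-- For every `n ≥ 1`, `h_n = n! · ν_n`, where `h_n` is the
maximum modulus of a 0/1-determinant of order n and `ν_n` is the maximum
Lebesgue volume of an n-dimensional simplex contained in the unit cube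
`Q_n = [0,1]^n`. -/
theorem maxDet_zeroOne_eq_factorial_mul_maxSimplexVolume
    (n : ℕ) (hn : 1 ≤ n) (h ν : ℝ)
    (hh : IsGreatest {x : ℝ | ∃ N : Matrix (Fin n) (Fin n) ℝ,
      (∀ i j, N i j = 0 ∨ N i j = 1) ∧ x = |N.det|} h)
    (hν : IsGreatest {v : ℝ | ∃ x : Fin (n + 1) → (Fin n → ℝ),
      AffineIndependent ℝ x ∧
      convexHull ℝ (Set.range x) ⊆ Set.Icc 0 1 ∧
      v = (volume (convexHull ℝ (Set.range x))).toReal} ν) :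
    h = (n.factorial : ℝ) * ν := by
  classical
  obtain ⟨⟨N, hN01, hNdet⟩, hub⟩ := hh
  obtain ⟨⟨y, hyind, hysub, hyvol⟩, hvub⟩ := hν
  have hub' : ∀ M : Matrix (Fin n) (Fin n) ℝ, (∀ i j, M i j = 0 ∨ M i j = 1) → |M.det| ≤ h :=
    fun M hM => hub ⟨M, hM, rfl⟩
  have hfac : (0:ℝ) < n.factorial := by positivity
  have h1 : 1 ≤ h := by
    have := hub' 1 (fun i j => by
      rcases eq_or_ne i j with rfl | hij
      · right; simp
      · left; simp [Matrix.one_apply_ne hij])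
    simpa using this
  have hA : (n.factorial : ℝ) * ν ≤ h := by
    have hy01 : ∀ i j, y i j ∈ Set.Icc (0:ℝ) 1 := by
      intro i j
      have hmem : y i ∈ Set.Icc (0 : Fin n → ℝ) 1 :=
        hysub (subset_convexHull ℝ _ (Set.mem_range_self i))
      exact ⟨hmem.1 j, hmem.2 j⟩
    have hdetle := det_bound hub' y hy01
    rw [hyvol, vol_hull n hn y, ENNReal.toReal_ofReal (by positivity)]
    rw [mul_div_cancel₀ _ (ne_of_gt hfac)]
    exact hdetle
  have hB : h ≤ (n.factorial : ℝ) * ν := by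
    have hdet0 : N.det ≠ 0 := by
      intro h0
      rw [h0, abs_zero] at hNdet
      linarith
    set x : Fin (n+1) → Fin n → ℝ := Fin.cons 0 (fun i => N i) with hx
    have hrange : Set.range x ⊆ Set.Icc (0 : Fin n → ℝ) 1 := by
      rintro - ⟨i, rfl⟩
      refine Fin.cases ?_ (fun i => ?_) i
      · exact ⟨le_rfl, fun j => zero_le_one⟩
      · constructor
        · intro j
          show (0:ℝ) ≤ x i.succ j
          rw [hx, Fin.cons_succ]
          rcases hN01 i j with hj | hj <;> rw [hj] <;> norm_num
        · intro j
          show x i.succ j ≤ (1:ℝ)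
          rw [hx, Fin.cons_succ]
          rcases hN01 i j with hj | hj <;> rw [hj] <;> norm_num
    have hsub : convexHull ℝ (Set.range x) ⊆ Set.Icc 0 1 :=
      convexHull_min hrange (convex_Icc _ _)
    have hmem := hvub ⟨x, affind N hdet0, hsub, rfl⟩
    have hMeq : (Matrix.of fun i j => x i.succ j - x 0 j) = N := by
      ext i j
      simp [hx, Fin.cons_succ, Fin.cons_zero]
    have hval : (volume (convexHull ℝ (Set.range x))).toReal = |N.det| / n.factorial := by
      rw [vol_hull n hn x, hMeq, ENNReal.toReal_ofReal (by positivity)]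
    rw [hval] at hmem
    rw [hNdet]
    calc |N.det| = (n.factorial : ℝ) * (|N.det| / n.factorial) := by
          field_simp
      _ ≤ (n.factorial : ℝ) * ν := by
          apply mul_le_mul_of_nonneg_left hmem (le_of_lt hfac)
  linarith
end

section
/- Let M be an n×n 0/1-matrix with |det(M)| = h_n, where h_n is the maximum of |det| over all n×n 0/1-matrices. Let S ⊂ ℝⁿ be the simplex whose vertices are the origin 0 together with the n rows of M (viewed as points of ℝⁿ). Then S is a nondegenerate simplex contained in the unit cube Q_n = [0,1]^n, and its Lebesgue volume equals ν_n, the maximum volume of an n-dimensional simplex contained in Q_n; in particular vol(S) = h_n / n!. -/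
open MeasureTheory

namespace SimplexAux

/-- The difference matrix of a tuple of `n+1` points of `ℝⁿ`. -/
noncomputable def D {n : ℕ} (x : Fin (n + 1) → Fin n → ℝ) : Matrix (Fin n) (Fin n) ℝ :=
  Matrix.of fun i j => x i.succ j - x 0 j

/-- The corner simplex of size `c`. -/
def T (n : ℕ) (c : ℝ) : Set (Fin n → ℝ) :=
  {u | (∀ i, 0 ≤ u i) ∧ ∑ i, u i ≤ c}

lemma measurableSet_T (n : ℕ) (c : ℝ) : MeasurableSet (T n c) := by
  have : T n c = (⋂ i, {u : Fin n → ℝ | 0 ≤ u i}) ∩ {u | ∑ i, u i ≤ c} := by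
    ext u; simp [T, Set.mem_iInter]
  rw [this]
  exact (MeasurableSet.iInter fun i =>
      measurableSet_le measurable_const (measurable_pi_apply i)).inter
    (measurableSet_le (Finset.measurable_sum _ fun i _ => measurable_pi_apply i)
      measurable_const)

lemma volume_T : ∀ (n : ℕ) (c : ℝ), 0 ≤ c →
    volume (T n c) = ENNReal.ofReal (c ^ n / n.factorial)
  | 0, c, hc => by
      have hT : T 0 c = Set.univ := by
        ext u
        simp [T, hc]
      rw [hT]
      have : (Set.univ : Set (Fin 0 → ℝ)) = Set.pi Set.univ (fun _ => Set.univ) := by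
        simp
      rw [this, volume_pi_pi]
      simp
  | (n + 1), c, hc => by
      classical
      set e := MeasurableEquiv.piFinSuccAbove (fun _ : Fin (n + 1) => ℝ) 0 with he
      have hmp : MeasurePreserving e.symm volume volume :=
        (volume_preserving_piFinSuccAbove (fun _ : Fin (n + 1) => ℝ) 0).symm
      set S : Set (ℝ × (Fin n → ℝ)) := e.symm ⁻¹' T (n + 1) c with hSdef
      have h1 : volume S = volume (T (n + 1) c) :=
        hmp.measure_preimage (measurableSet_T _ _).nullMeasurableSet
      have hSm : MeasurableSet S := (measurableSet_T _ _).preimage e.symm.measurable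
      have hS : S = {p : ℝ × (Fin n → ℝ) |
          (0 ≤ p.1 ∧ ∀ i, 0 ≤ p.2 i) ∧ p.1 + ∑ i, p.2 i ≤ c} := by
        ext ⟨t, u⟩
        have hsymm : e.symm (t, u) = Fin.cons t u := by
          simp [he, MeasurableEquiv.piFinSuccAbove, Fin.insertNth_zero', Fin.consEquiv]
        simp only [hSdef, Set.mem_preimage, hsymm, T, Set.mem_setOf_eq,
          Fin.forall_fin_succ, Fin.cons_zero, Fin.cons_succ, Fin.sum_cons]
      have hslice : ∀ t : ℝ, volume (Prod.mk t ⁻¹' S) =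
          (Set.Icc (0 : ℝ) c).indicator
            (fun t => ENNReal.ofReal ((c - t) ^ n / n.factorial)) t := by
        intro t
        by_cases ht0 : 0 ≤ t
        · by_cases htc : t ≤ c
          · have hpre : Prod.mk t ⁻¹' S = T n (c - t) := by
              ext u
              simp only [hS, Set.mem_preimage, Set.mem_setOf_eq, T]
              constructor
              · rintro ⟨⟨-, hu⟩, hsum⟩
                exact ⟨hu, by linarith⟩
              · rintro ⟨hu, hsum⟩
                exact ⟨⟨ht0, hu⟩, by linarith⟩
            rw [hpre, volume_T n (c - t) (by linarith),
              Set.indicator_of_mem (Set.mem_Icc.2 ⟨ht0, htc⟩)]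
          · have hpre : Prod.mk t ⁻¹' S = ∅ := by
              ext u
              simp only [hS, Set.mem_preimage, Set.mem_setOf_eq, Set.mem_empty_iff_false,
                iff_false, not_and]
              rintro ⟨-, hu⟩
              have : (0 : ℝ) ≤ ∑ i, u i := Finset.sum_nonneg fun i _ => hu i
              intro hsum
              linarith [htc, this]
            rw [hpre, Set.indicator_of_notMem (by simp [Set.mem_Icc]; intro; linarith)]
            simp
        · have hpre : Prod.mk t ⁻¹' S = ∅ := by
            ext u
            simp only [hS, Set.mem_preimage, Set.mem_setOf_eq, Set.mem_empty_iff_false,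
              iff_false, not_and]
            rintro ⟨h0, -⟩
            exact absurd h0 ht0
          rw [hpre, Set.indicator_of_notMem (by simp [Set.mem_Icc]; intro; linarith)]
          simp
      have h2 : volume S = ∫⁻ t : ℝ, volume (Prod.mk t ⁻¹' S) := by
        rw [show (volume : Measure (ℝ × (Fin n → ℝ))) = volume.prod volume from rfl]
        exact Measure.prod_apply hSm
      have h3 : (∫⁻ t : ℝ, volume (Prod.mk t ⁻¹' S)) =
          ∫⁻ t in Set.Icc (0 : ℝ) c, ENNReal.ofReal ((c - t) ^ n / n.factorial) := by
        simp_rw [hslice]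
        rw [lintegral_indicator measurableSet_Icc]
      have hcont : Continuous fun t : ℝ => (c - t) ^ n / n.factorial := by
        fun_prop
      have h4 : (∫⁻ t in Set.Icc (0 : ℝ) c, ENNReal.ofReal ((c - t) ^ n / n.factorial)) =
          ENNReal.ofReal (∫ t in Set.Icc (0 : ℝ) c, (c - t) ^ n / n.factorial) := by
        rw [← ofReal_integral_eq_lintegral_ofReal (hcont.integrableOn_Icc)]
        exact (ae_restrict_iff' measurableSet_Icc).2 (ae_of_all _ fun t ht => by
          have : 0 ≤ c - t := by linarith [ht.2]
          positivity)
      have h5 : (∫ t in Set.Icc (0 : ℝ) c, (c - t) ^ n / n.factorial) =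
          c ^ (n + 1) / (n + 1).factorial := by
        rw [MeasureTheory.integral_Icc_eq_integral_Ioc,
          ← intervalIntegral.integral_of_le hc]
        rw [intervalIntegral.integral_div]
        rw [intervalIntegral.integral_comp_sub_left (fun s => s ^ n) c]
        rw [sub_zero, sub_self, integral_pow]
        rw [Nat.factorial_succ]
        field_simp
        rw [zero_pow (Nat.succ_ne_zero n), sub_zero]
        push_cast
        ring
      rw [← h1, h2, h3, h4, h5]

/-- The vertices of the standard corner simplex. -/
noncomputable def w (n : ℕ) : Fin (n + 1) → Fin n → ℝ :=
  Fin.cons 0 fun i => Pi.single i 1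

lemma convex_T (n : ℕ) (c : ℝ) : Convex ℝ (T n c) := by
  intro u hu v hv a b ha hb hab
  refine ⟨fun i => by
    have h1 := hu.1 i; have h2 := hv.1 i
    simp only [Pi.add_apply, Pi.smul_apply, smul_eq_mul]
    positivity, ?_⟩
  simp only [Pi.add_apply, Pi.smul_apply, smul_eq_mul, Finset.sum_add_distrib,
    ← Finset.mul_sum]
  calc a * ∑ i, u i + b * ∑ i, v i ≤ a * c + b * c := by
        gcongr
        exacts [hu.2, hv.2]
    _ = c := by rw [← add_mul, hab, one_mul]

lemma hull_w (n : ℕ) : convexHull ℝ (Set.range (w n)) = T n 1 := by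
  apply le_antisymm
  · apply convexHull_min _ (convex_T n 1)
    rintro _ ⟨j, rfl⟩
    induction j using Fin.cases with
    | zero =>
        refine ⟨fun i => le_refl _, by simp [w]⟩
    | succ i =>
        refine ⟨fun j => ?_, ?_⟩
        · simp only [w, Fin.cons_succ]
          by_cases hij : j = i <;> simp [Pi.single_apply, hij]
        · simp only [w, Fin.cons_succ]
          simp [Finset.sum_pi_single]
  · intro u hu
    have key : u = ∑ j : Fin (n + 1), (Fin.cons (1 - ∑ i, u i) u : Fin (n + 1) → ℝ) j • w n j := by
      rw [Fin.sum_univ_succ]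
      simp only [Fin.cons_zero, Fin.cons_succ, w, smul_zero, zero_add]
      funext j
      simp only [Finset.sum_apply, Pi.smul_apply, smul_eq_mul, Pi.single_apply, mul_ite,
        mul_one, mul_zero]
      simp
    rw [key]
    apply (convex_convexHull ℝ _).sum_mem
    · intro j _
      induction j using Fin.cases with
      | zero => simpa using hu.2
      | succ i => simpa using hu.1 i
    · rw [Fin.sum_univ_succ]
      simp
    · intro j _
      exact subset_convexHull ℝ _ (Set.mem_range_self j)

lemma vol_hull {n : ℕ} (x : Fin (n + 1) → Fin n → ℝ) :
    volume (convexHull ℝ (Set.range x)) =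
      ENNReal.ofReal (|(D x).det| / n.factorial) := by
  classical
  set L : (Fin n → ℝ) →ₗ[ℝ] (Fin n → ℝ) := Matrix.toLin' (D x).transpose with hL
  set A : (Fin n → ℝ) →ᵃ[ℝ] (Fin n → ℝ) :=
    ((AffineEquiv.constVAdd ℝ (Fin n → ℝ) (x 0)).toAffineMap).comp L.toAffineMap with hA
  have hAapp : ∀ u, A u = x 0 + L u := fun u => rfl
  have hxj : ∀ j, x j = A (w n j) := by
    intro j
    induction j using Fin.cases with
    | zero => simp [hAapp, w]
    | succ i =>
        rw [hAapp]
        funext k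
        simp only [hL, w, Fin.cons_succ, Pi.add_apply, Matrix.toLin'_apply,
          Matrix.mulVec_single, Matrix.transpose_apply, mul_one]
        simp [D]
  have hrange : Set.range x = A '' Set.range (w n) := by
    have hxw : x = A ∘ w n := funext hxj
    rw [hxw, Set.range_comp]
  rw [hrange, ← AffineMap.image_convexHull, hull_w]
  have himg : A '' T n 1 = (fun u => x 0 + u) '' (L '' T n 1) := by
    rw [← Set.image_comp]
    rfl
  rw [himg]
  have htrans : (fun u => x 0 + u) '' (L '' T n 1) =
      (fun u => -x 0 + u) ⁻¹' (L '' T n 1) := Set.image_add_left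
  rw [htrans, measure_preimage_add, Measure.addHaar_image_linearMap,
    volume_T n 1 zero_le_one, hL, LinearMap.det_toLin', Matrix.det_transpose,
    ← ENNReal.ofReal_mul (abs_nonneg _)]
  rw [one_pow, mul_one_div]

lemma detD_le {n : ℕ} (h : ℝ)
    (hub : ∀ N : Matrix (Fin n) (Fin n) ℝ,
      (∀ i j, N i j = 0 ∨ N i j = 1) → |N.det| ≤ h)
    (y : Fin (n + 1) → Fin n → ℝ)
    (hy : ∀ k j, y k j ∈ Set.Icc (0 : ℝ) 1) : |(D y).det| ≤ h := by
  classical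
  suffices H : ∀ s : Finset (Fin (n + 1) × Fin n), ∀ y : Fin (n + 1) → Fin n → ℝ,
      (∀ k j, y k j ∈ Set.Icc (0 : ℝ) 1) →
      (∀ p : Fin (n + 1) × Fin n, p ∉ s → y p.1 p.2 = 0 ∨ y p.1 p.2 = 1) →
      |(D y).det| ≤ h by
    exact H Finset.univ y hy fun p hp => absurd (Finset.mem_univ p) hp
  intro s
  induction s using Finset.induction_on with
  | empty =>
      intro y hy h01
      set N : Matrix (Fin n) (Fin n) ℝ :=
        Matrix.of fun i j => if y 0 j = 1 then 1 - y i.succ j else y i.succ j with hN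
      have hN01 : ∀ i j, N i j = 0 ∨ N i j = 1 := by
        intro i j
        rcases h01 (i.succ, j) (by simp) with h0 | h0 <;>
          rcases h01 ((0 : Fin (n + 1)), j) (by simp) with h1 | h1 <;>
          simp [hN, h0, h1]
      have hDN : D y = Matrix.of fun i j => (if y 0 j = 1 then (-1 : ℝ) else 1) * N i j := by
        ext i j
        rcases h01 ((0 : Fin (n + 1)), j) (by simp) with h1 | h1 <;>
          simp [hN, D, h1] <;> ring
      rw [hDN, Matrix.det_mul_row, abs_mul, Finset.abs_prod]
      have habs : ∀ j ∈ Finset.univ, |if y 0 j = 1 then (-1 : ℝ) else 1| = 1 :=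
        fun j _ => by split <;> simp
      rw [Finset.prod_congr rfl habs]
      simp only [Finset.prod_const_one, one_mul]
      exact hub N hN01
  | @insert p s hps ih =>
      intro y hy h01
      obtain ⟨k, j⟩ := p
      set upd : ℝ → (Fin (n + 1) → Fin n → ℝ) :=
        fun t => Function.update y k (Function.update (y k) j t) with hupd
      have hupd_apply : ∀ t m j', upd t m j' = if m = k ∧ j' = j then t else y m j' := by
        intro t m j'
        by_cases hm : m = k
        · subst hm
          by_cases hj' : j' = j <;> simp [hupd, Function.update_apply, hj']
        · simp [hupd, Function.update_apply, hm]
      have hcol : ∀ t : ℝ, D (upd t) = (D (upd 0)).updateCol j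
          (fun i => (1 - t) * D (upd 0) i j + t * D (upd 1) i j) := by
        intro t
        ext i j'
        rw [Matrix.updateCol_apply]
        by_cases hj' : j' = j
        · subst hj'
          rw [if_pos rfl]
          simp only [D, Matrix.of_apply, hupd_apply]
          split_ifs with ha hb hb <;>
            first
              | ring
              | exact absurd (ha.1.trans hb.1.symm) (Fin.succ_ne_zero i)
        · rw [if_neg hj']
          simp [D, hupd_apply, hj']
      have hcol1 : (D (upd 0)).updateCol j (fun i => D (upd 1) i j) = D (upd 1) := by
        ext i j'
        rw [Matrix.updateCol_apply]
        by_cases hj' : j' = j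
        · rw [if_pos hj', hj']
        · rw [if_neg hj']
          simp [D, hupd_apply, hj']
      have hdet : ∀ t : ℝ, (D (upd t)).det =
          (1 - t) * (D (upd 0)).det + t * (D (upd 1)).det := by
        intro t
        rw [hcol t]
        rw [show (fun i => (1 - t) * D (upd 0) i j + t * D (upd 1) i j) =
            ((1 - t) • fun i => D (upd 0) i j) + (t • fun i => D (upd 1) i j) from rfl]
        rw [Matrix.det_updateCol_add, Matrix.det_updateCol_smul,
          Matrix.det_updateCol_smul, Matrix.updateCol_eq_self, hcol1]
      have hy0 : ∀ m j', upd 0 m j' ∈ Set.Icc (0 : ℝ) 1 := by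
        intro m j'
        rw [hupd_apply]
        split
        · exact ⟨le_refl 0, zero_le_one⟩
        · exact hy m j'
      have hy1 : ∀ m j', upd 1 m j' ∈ Set.Icc (0 : ℝ) 1 := by
        intro m j'
        rw [hupd_apply]
        split
        · exact ⟨zero_le_one, le_refl 1⟩
        · exact hy m j'
      have hout : ∀ t : ℝ, (t = 0 ∨ t = 1) → ∀ q : Fin (n + 1) × Fin n, q ∉ s →
          upd t q.1 q.2 = 0 ∨ upd t q.1 q.2 = 1 := by
        intro t ht q hq
        rw [hupd_apply]
        by_cases hqp : q.1 = k ∧ q.2 = j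
        · rw [if_pos hqp]; exact ht
        · rw [if_neg hqp]
          apply h01 q
          intro hmem
          rcases Finset.mem_insert.1 hmem with heq | hqs
          · rw [heq] at hqp; exact hqp ⟨rfl, rfl⟩
          · exact hq hqs
      have d0 := ih (upd 0) hy0 (hout 0 (Or.inl rfl))
      have d1 := ih (upd 1) hy1 (hout 1 (Or.inr rfl))
      have hyeq : y = upd (y k j) := by
        funext m j'
        rw [hupd_apply]
        split
        · rename_i hmj
          rw [hmj.1, hmj.2]
        · rfl
      have ht0 := (hy k j).1
      have ht1 := (hy k j).2
      have hh0 : 0 ≤ h := le_trans (abs_nonneg _) d0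
      calc |(D y).det| = |(1 - y k j) * (D (upd 0)).det + y k j * (D (upd 1)).det| := by
            conv_lhs => rw [hyeq]
            rw [hdet (y k j)]
        _ ≤ |(1 - y k j) * (D (upd 0)).det| + |y k j * (D (upd 1)).det| := abs_add_le _ _
        _ = (1 - y k j) * |(D (upd 0)).det| + y k j * |(D (upd 1)).det| := by
            rw [abs_mul, abs_mul, abs_of_nonneg (by linarith), abs_of_nonneg ht0]
        _ ≤ (1 - y k j) * h + y k j * h := by gcongr <;> linarith
        _ = h := by ring

lemma affineIndependent_of_det {n : ℕ} (x : Fin (n + 1) → Fin n → ℝ)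
    (hd : (D x).det ≠ 0) : AffineIndependent ℝ x := by
  rw [affineIndependent_iff_linearIndependent_vsub ℝ x 0]
  have hrows : LinearIndependent ℝ (fun i => (D x) i) :=
    Matrix.linearIndependent_rows_iff_isUnit.2
      ((Matrix.isUnit_iff_isUnit_det _).2 (isUnit_iff_ne_zero.2 hd))
  let e : Fin n ≃ {j : Fin (n + 1) // j ≠ 0} :=
  { toFun := fun i => ⟨i.succ, Fin.succ_ne_zero i⟩
    invFun := fun j => (j : Fin (n + 1)).pred j.2
    left_inv := fun i => by simp
    right_inv := fun j => by simp }
  rw [← linearIndependent_equiv e]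
  have : (fun (i : {j : Fin (n + 1) // j ≠ 0}) => x ↑i -ᵥ x 0) ∘ e = fun i => (D x) i := by
    funext i
    ext j
    simp [e, D, vsub_eq_sub]
  rw [this]
  exact hrows

end SimplexAux

theorem simplex_from_maxDet_matrix_has_max_volume
    (n : ℕ) (h ν : ℝ)
    (hh : IsGreatest {x : ℝ | ∃ N : Matrix (Fin n) (Fin n) ℝ,
      (∀ i j, N i j = 0 ∨ N i j = 1) ∧ x = |N.det|} h)
    (hν : IsGreatest {v : ℝ | ∃ x : Fin (n + 1) → (Fin n → ℝ),
      AffineIndependent ℝ x ∧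
      convexHull ℝ (Set.range x) ⊆ Set.Icc 0 1 ∧
      v = (volume (convexHull ℝ (Set.range x))).toReal} ν)
    (M : Matrix (Fin n) (Fin n) ℝ)
    (hM01 : ∀ i j, M i j = 0 ∨ M i j = 1)
    (hMdet : |M.det| = h)
    (v : Fin (n + 1) → (Fin n → ℝ))
    (hv : ∀ j : Fin (n + 1),
      v j = if hj : (j : ℕ) < n then M ⟨j, hj⟩ else 0) :
    AffineIndependent ℝ v ∧
    convexHull ℝ (Set.range v) ⊆ Set.Icc 0 1 ∧
    (volume (convexHull ℝ (Set.range v))).toReal = ν ∧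
    (volume (convexHull ℝ (Set.range v))).toReal = h / (n.factorial : ℝ) := by
  classical
  set x : Fin (n + 1) → Fin n → ℝ := Fin.cons 0 (fun i => M i) with hx
  have hvx : v = x ∘ (finRotate (n + 1)) := by
    funext j
    rw [hv j]
    by_cases hj : (j : ℕ) < n
    · have h1 : finRotate (n + 1) j = Fin.succ ⟨j, hj⟩ := by
        rw [finRotate_succ_apply]
        ext
        rw [Fin.val_add_one]
        have : j ≠ Fin.last n := by
          intro hc; rw [hc] at hj; simp at hj
        simp [this]
      simp only [Function.comp_apply, h1, hx, Fin.cons_succ, dif_pos hj]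
    · have hj' : j = Fin.last n := by
        ext
        have := j.isLt
        simp only [Fin.val_last]
        omega
      rw [dif_neg hj, hj']
      simp only [Function.comp_apply, finRotate_last, hx, Fin.cons_zero]
  have hrange : Set.range v = Set.range x := by
    rw [hvx]
    exact (finRotate (n + 1)).surjective.range_comp x
  have hDx : SimplexAux.D x = M := by
    ext i j
    simp [SimplexAux.D, hx]
  -- h ≥ 1
  have h1 : (1 : ℝ) ≤ h := by
    have := hh.2 (Set.mem_setOf.2
      ⟨1, fun i j => by by_cases hij : i = j <;> simp [Matrix.one_apply, hij], rfl⟩)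
    simpa using this
  have hMdet0 : M.det ≠ 0 := by
    intro hc
    rw [hc] at hMdet
    simp at hMdet
    linarith
  -- affine independence
  have hAIx : AffineIndependent ℝ x :=
    SimplexAux.affineIndependent_of_det x (by rw [hDx]; exact hMdet0)
  have hAIv : AffineIndependent ℝ v := by
    rw [hvx]
    exact (affineIndependent_equiv (finRotate (n + 1))).2 hAIx
  -- containment in the cube
  have hsub : convexHull ℝ (Set.range v) ⊆ Set.Icc 0 1 := by
    apply convexHull_min _ (convex_Icc _ _)
    rw [hrange]
    rintro _ ⟨j, rfl⟩
    induction j using Fin.cases with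
    | zero =>
        simp only [hx, Fin.cons_zero]
        exact ⟨le_refl _, zero_le_one⟩
    | succ i =>
        simp only [hx, Fin.cons_succ]
        constructor <;> intro j <;> rcases hM01 i j with h0 | h0 <;>
          simp [h0]
  -- volume formula
  have hvol : volume (convexHull ℝ (Set.range v)) =
      ENNReal.ofReal (h / n.factorial) := by
    rw [hrange, SimplexAux.vol_hull x, hDx, hMdet]
  have hfacpos : (0 : ℝ) < (n.factorial : ℝ) := by positivity
  have hvolr : (volume (convexHull ℝ (Set.range v))).toReal = h / n.factorial := by
    rw [hvol, ENNReal.toReal_ofReal (by positivity)]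
  refine ⟨hAIv, hsub, ?_, hvolr⟩
  -- volume is the maximum ν
  have hub : ∀ N : Matrix (Fin n) (Fin n) ℝ,
      (∀ i j, N i j = 0 ∨ N i j = 1) → |N.det| ≤ h := fun N hN =>
    hh.2 ⟨N, hN, rfl⟩
  apply le_antisymm
  · exact hν.2 ⟨v, hAIv, hsub, rfl⟩
  · obtain ⟨y, hAIy, hysub, hyvol⟩ := hν.1
    rw [hyvol, SimplexAux.vol_hull y, ENNReal.toReal_ofReal (by positivity), hvolr]
    have hy01 : ∀ k j, y k j ∈ Set.Icc (0 : ℝ) 1 := by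
      intro k j
      have : y k ∈ Set.Icc (0 : Fin n → ℝ) 1 :=
        hysub (subset_convexHull ℝ _ (Set.mem_range_self k))
      exact ⟨this.1 j, this.2 j⟩
    exact (div_le_div_iff_of_pos_right hfacpos).2 (SimplexAux.detD_le h hub y hy01)
end

section
/- Let S ⊂ ℝⁿ be a nondegenerate n-dimensional simplex with vertices x^{(1)},…,x^{(n+1)}, let A be its node matrix (the (n+1)×(n+1) matrix whose j-th row is (x^{(j)}_1,…,x^{(j)}_n,1)), and write A^{-1}=(l_{ij}). Then for every i=1,…,n the i-th axial diameter of S satisfies 1/d_i(S) = (1/2)·∑_{j=1}^{n+1} |l_{ij}|. -/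
open Matrix in
/-- For a nondegenerate n-dimensional simplex `S` with vertices
`x⁽¹⁾,…,x⁽ⁿ⁺¹⁾`, node matrix `A` and `A⁻¹ = (l_ij)`, the i-th axial
diameter satisfies `1/d_i(S) = (1/2)·∑_j |l_ij|`. -/
theorem axial_diameter_formula
    (n : ℕ) (x : Fin (n + 1) → (Fin n → ℝ))
    (hx : AffineIndependent ℝ x)
    (A : Matrix (Fin (n + 1)) (Fin (n + 1)) ℝ)
    (hA : ∀ (j : Fin (n + 1)) (i : Fin (n + 1)), A j i =
      if hi : (i : ℕ) < n then x j ⟨i, hi⟩ else 1)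
    (d : Fin n → ℝ)
    (hd : ∀ i : Fin n, IsGreatest {t : ℝ | 0 ≤ t ∧ ∃ y ∈ convexHull ℝ (Set.range x),
      y + t • (Pi.single i 1 : Fin n → ℝ) ∈ convexHull ℝ (Set.range x)} (d i)) :
    ∀ i : Fin n, 1 / d i = (1 / 2) * ∑ j, |A⁻¹ i.castSucc j| := by
  classical
  -- w ᵥ* A in terms of weighted sums
  have hA_sum : ∀ w : Fin (n+1) → ℝ, w ᵥ* A = Fin.snoc (∑ j, w j • x j) (∑ j, w j) := by
    intro w
    funext k
    refine Fin.lastCases ?_ (fun k => ?_) k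
    · simp [Matrix.vecMul, dotProduct, hA]
    · simp [Matrix.vecMul, dotProduct, hA, k.is_lt, Finset.sum_apply]
  -- A is invertible
  have hdet : A.det ≠ 0 := by
    intro h
    obtain ⟨v, hv0, hv⟩ := Matrix.exists_vecMul_eq_zero_iff.mpr h
    rw [hA_sum] at hv
    have h1 : ∑ j, v j = 0 := by
      have := congrFun hv (Fin.last n)
      simpa using this
    have h2 : ∑ j, v j • x j = 0 := by
      funext k
      have := congrFun hv (Fin.castSucc k)
      simpa using this
    have := affineIndependent_iff.mp hx Finset.univ v (by simpa using h1) (by simpa using h2)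
    exact hv0 (funext fun j => this j (Finset.mem_univ j))
  have hdetU : IsUnit A.det := isUnit_iff_ne_zero.mpr hdet
  set L := A⁻¹ with hLdef
  have hAL : A * L = 1 := Matrix.mul_nonsing_inv A hdetU
  have hLA : L * A = 1 := Matrix.nonsing_inv_mul A hdetU
  -- barycentric coordinates
  have hbA : ∀ y : Fin n → ℝ, (Fin.snoc y 1 ᵥ* L) ᵥ* A = Fin.snoc y 1 := by
    intro y
    rw [Matrix.vecMul_vecMul, hLA, Matrix.vecMul_one]
  have hb_sum : ∀ y : Fin n → ℝ, ∑ j, (Fin.snoc y 1 ᵥ* L) j = 1 := by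
    intro y
    have h := (hbA y).symm.trans (hA_sum (Fin.snoc y 1 ᵥ* L))
    have := congrFun h (Fin.last n)
    simpa using this.symm
  have hb_pt : ∀ y : Fin n → ℝ, ∑ j, (Fin.snoc y 1 ᵥ* L) j • x j = y := by
    intro y
    have h := (hbA y).symm.trans (hA_sum (Fin.snoc y 1 ᵥ* L))
    funext k
    have := congrFun h (Fin.castSucc k)
    simpa using this.symm
  -- membership characterization
  have hb : ∀ y : Fin n → ℝ,
      y ∈ convexHull ℝ (Set.range x) ↔ ∀ j, 0 ≤ (Fin.snoc y 1 ᵥ* L) j := by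
    intro y
    constructor
    · intro hy
      rw [convexHull_range_eq_exists_affineCombination] at hy
      obtain ⟨s, w, h0, h1, hy⟩ := hy
      set w' : Fin (n+1) → ℝ := fun j => if j ∈ s then w j else 0 with hw'
      have hw0 : ∀ j, 0 ≤ w' j := by
        intro j
        by_cases hj : j ∈ s
        · simp [hw', hj, h0 j hj]
        · simp [hw', hj]
      have hw1 : ∑ j, w' j = 1 := by
        rw [← h1]; simp [hw', Finset.sum_ite_mem]
      have hwy : ∑ j, w' j • x j = y := by
        rw [← hy, s.affineCombination_eq_linear_combination x w h1]
        simp [hw', ite_smul, Finset.sum_ite_mem]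
      have hwA : w' ᵥ* A = Fin.snoc y 1 := by rw [hA_sum, hw1, hwy]
      have : w' = Fin.snoc y 1 ᵥ* L := by
        rw [← hwA, Matrix.vecMul_vecMul, hAL, Matrix.vecMul_one]
      rw [← this]; exact hw0
    · intro hy
      have := mem_convexHull_of_exists_fintype (Fin.snoc y 1 ᵥ* L) x hy (hb_sum y)
        (fun j => Set.mem_range_self j) rfl
      rwa [hb_pt y] at this
  intro i
  set c : Fin (n+1) → ℝ := fun j => L i.castSucc j with hc
  -- shift formula
  have hshift : ∀ (y : Fin n → ℝ) (t : ℝ),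
      (Fin.snoc (y + t • (Pi.single i 1 : Fin n → ℝ)) (1:ℝ) ᵥ* L) = (Fin.snoc y 1 ᵥ* L) + t • c := by
    intro y t
    have hsnoc : (Fin.snoc (y + t • (Pi.single i 1 : Fin n → ℝ)) (1:ℝ) : Fin (n+1) → ℝ)
        = (Fin.snoc y 1 : Fin (n+1) → ℝ) + t • (Pi.single i.castSucc 1 : Fin (n+1) → ℝ) := by
      funext k
      refine Fin.lastCases ?_ (fun k => ?_) k
      · simp [Pi.single_apply, (Fin.castSucc_lt_last i).ne']
      · simp [Pi.single_apply, Fin.castSucc_inj]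
    rw [hsnoc, Matrix.add_vecMul, Matrix.smul_vecMul, Matrix.single_one_vecMul]
    rfl
  -- row sum is zero
  have hrow0 : ∑ j, c j = 0 := by
    have h := congrFun (congrFun hLA i.castSucc) (Fin.last n)
    have h1 : (1 : Matrix (Fin (n+1)) (Fin (n+1)) ℝ) i.castSucc (Fin.last n) = 0 :=
      Matrix.one_apply_ne (Fin.castSucc_lt_last i).ne
    rw [Matrix.mul_apply] at h
    rw [h1] at h
    rw [← h]
    apply Finset.sum_congr rfl
    intro j _
    simp [hc, hA]
  set σ : ℝ := ∑ j, |c j| with hσ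
  have hσ0 : 0 < σ := by
    rcases (Finset.sum_nonneg (fun j _ => abs_nonneg (c j))).lt_or_eq with h | h
    · exact h
    · exfalso
      have hz : ∀ j, c j = 0 := by
        intro j
        have := (Finset.sum_eq_zero_iff_of_nonneg (fun j _ => abs_nonneg (c j))).mp h.symm
          j (Finset.mem_univ j)
        exact abs_eq_zero.mp this
      have h := congrFun (congrFun hLA i.castSucc) i.castSucc
      rw [Matrix.mul_apply, Matrix.one_apply_eq] at h
      have : (0:ℝ) = 1 := by
        rw [← h]
        symm
        apply Finset.sum_eq_zero
        intro j _
        simp [show L i.castSucc j = 0 from hz j]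
      norm_num at this
  -- positive and negative parts
  have hpq : ∀ a : ℝ, max a 0 + max (-a) 0 = |a| := max_zero_add_max_neg_zero_eq_abs_self
  have hp_sum : ∑ j, max (c j) 0 = σ / 2 ∧ ∑ j, max (-(c j)) 0 = σ / 2 := by
    have h1 : ∑ j, max (c j) 0 + ∑ j, max (-(c j)) 0 = σ := by
      rw [← Finset.sum_add_distrib, hσ]
      exact Finset.sum_congr rfl fun j _ => hpq (c j)
    have h2 : ∑ j, max (c j) 0 - ∑ j, max (-(c j)) 0 = 0 := by
      rw [← Finset.sum_sub_distrib]
      have heq : ∀ j ∈ Finset.univ, max (c j) 0 - max (-(c j)) 0 = c j := by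
        intro j _
        rcases le_total (c j) 0 with h | h
        · rw [max_eq_right h, max_eq_left (neg_nonneg.mpr h)]; ring
        · rw [max_eq_left h, max_eq_right (neg_nonpos.mpr h)]; ring
      rw [Finset.sum_congr rfl heq, hrow0]
    constructor <;> linarith
  -- the candidate maximal t
  set t0 : ℝ := 2 / σ with ht0
  have ht0pos : 0 < t0 := by positivity
  have ht0mem : t0 ∈ {t : ℝ | 0 ≤ t ∧ ∃ y ∈ convexHull ℝ (Set.range x),
      y + t • (Pi.single i 1 : Fin n → ℝ) ∈ convexHull ℝ (Set.range x)} := by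
    refine ⟨ht0pos.le, ?_⟩
    set w : Fin (n+1) → ℝ := fun j => t0 * max (-(c j)) 0 with hw
    have hw0 : ∀ j, 0 ≤ w j := fun j => mul_nonneg ht0pos.le (le_max_right _ _)
    have hw1 : ∑ j, w j = 1 := by
      rw [hw]
      simp only
      rw [← Finset.mul_sum, hp_sum.2, ht0]
      field_simp
    set y : Fin n → ℝ := ∑ j, w j • x j with hy
    have hwA : w ᵥ* A = Fin.snoc y 1 := by rw [hA_sum, hw1, hy]
    have hwb : Fin.snoc y 1 ᵥ* L = w := by
      rw [← hwA, Matrix.vecMul_vecMul, hAL, Matrix.vecMul_one]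
    refine ⟨y, (hb y).mpr (by rw [hwb]; exact hw0), (hb _).mpr ?_⟩
    intro j
    rw [hshift y t0, hwb]
    have : w j + t0 * c j = t0 * max (c j) 0 := by
      rw [hw]
      simp only
      rw [← mul_add]
      congr 1
      rcases le_total (c j) 0 with h | h
      · rw [max_eq_left (neg_nonneg.mpr h), max_eq_right h]; ring
      · rw [max_eq_right (neg_nonpos.mpr h), max_eq_left h]; ring
    have h2 : 0 ≤ w j + t0 * c j := by
      rw [this]; exact mul_nonneg ht0pos.le (le_max_right _ _)
    simpa using h2
  have hle : t0 ≤ d i := (hd i).2 ht0mem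
  have hge : d i ≤ t0 := by
    obtain ⟨hd0, y, hy, hy'⟩ := (hd i).1
    set w : Fin (n+1) → ℝ := Fin.snoc y 1 ᵥ* L with hw
    have hw0 : ∀ j, 0 ≤ w j := (hb y).mp hy
    have hw0' : ∀ j, 0 ≤ w j + d i * c j := by
      intro j
      have := (hb _).mp hy' j
      rw [hshift y (d i)] at this
      simpa [hw] using this
    have hkey : d i * (σ / 2) ≤ 1 := by
      rw [← hp_sum.2, Finset.mul_sum, ← hb_sum y]
      apply Finset.sum_le_sum
      intro j _
      rcases le_total (c j) 0 with h | h
      · rw [max_eq_left (neg_nonneg.mpr h)]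
        have := hw0' j
        nlinarith
      · rw [max_eq_right (neg_nonpos.mpr h)]
        simpa using hw0 j
    rw [ht0, le_div_iff₀ hσ0]
    nlinarith
  have hdi : d i = t0 := le_antisymm hge hle
  rw [hdi, ht0, one_div_div]
  ring
end

section
/- Let S ⊂ ℝⁿ be a nondegenerate n-dimensional simplex. Then α(S) = ∑_{i=1}^{n} 1/d_i(S), where α(S) is the minimal σ > 0 such that the unit cube Q_n = [0,1]^n is contained in some translate of the scaled copy σ·S, and d_i(S) is the i-th axial diameter of S. -/
open Finset

/-- For a nondegenerate n-dimensional simplex `S`,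
`α(S) = ∑_i 1/d_i(S)`, where `α(S)` is the least `σ > 0` such that the unit
cube `[0,1]^n` is contained in a translate of `σ·S`, and `d_i(S)` is the
i-th axial diameter of `S`. -/
theorem alpha_eq_sum_inv_axial_diameters
    (n : ℕ) (x : Fin (n + 1) → (Fin n → ℝ))
    (hx : AffineIndependent ℝ x)
    (d : Fin n → ℝ)
    (hd : ∀ i : Fin n, IsGreatest {t : ℝ | 0 ≤ t ∧ ∃ y ∈ convexHull ℝ (Set.range x),
      y + t • (Pi.single i 1 : Fin n → ℝ) ∈ convexHull ℝ (Set.range x)} (d i))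
    (a : ℝ)
    (ha : IsLeast {σ : ℝ | 0 < σ ∧ ∃ c : Fin n → ℝ,
      Set.Icc 0 1 ⊆ (fun y => σ • y + c) '' convexHull ℝ (Set.range x)} a) :
    a = ∑ i, 1 / d i := by
  classical
  rcases Nat.eq_zero_or_pos n with hn | hn
  · subst hn
    exfalso
    obtain ⟨⟨hapos, c, hsub⟩, hlb⟩ := ha
    have h2 : a ≤ a / 2 := by
      refine hlb ⟨by linarith, c, fun y hy => ?_⟩
      exact ⟨x 0, subset_convexHull ℝ _ ⟨0, rfl⟩, Subsingleton.elim _ _⟩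
    linarith
  have hne : Nonempty (Fin n) := ⟨⟨0, hn⟩⟩
  -- Build the affine basis
  have htop : affineSpan ℝ (Set.range x) = ⊤ := by
    rw [hx.affineSpan_eq_top_iff_card_eq_finrank_add_one]
    simp
  let b : AffineBasis (Fin (n + 1)) ℝ (Fin n → ℝ) := ⟨x, hx, htop⟩
  have hbx : Set.range ⇑b = Set.range x := rfl
  have hK : ∀ y : Fin n → ℝ, y ∈ convexHull ℝ (Set.range x) ↔ ∀ j, 0 ≤ b.coord j y := by
    intro y
    rw [← hbx, b.convexHull_eq_nonneg_coord]; rfl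
  set l : Fin n → Fin (n + 1) → ℝ := fun i j => (b.coord j).linear (Pi.single i 1) with hl
  set m : Fin n → Fin (n + 1) → ℝ := fun i j => max 0 (-(l i j)) with hm
  have hm0 : ∀ i j, 0 ≤ m i j := fun i j => le_max_left _ _
  set s : Fin n → ℝ := fun i => ∑ j, m i j with hs
  have hs0 : ∀ i, 0 ≤ s i := fun i => Finset.sum_nonneg fun j _ => hm0 i j
  have hcoord_add : ∀ (j) (p v : Fin n → ℝ),
      b.coord j (p + v) = b.coord j p + (b.coord j).linear v := by
    intro j p v
    have := (b.coord j).map_vadd p v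
    simpa [add_comm] using this
  have hlin : ∀ (j) (v : Fin n → ℝ), (b.coord j).linear v = ∑ i, v i * l i j := by
    intro j v
    have h1 : ∀ i : Fin n, (fun j' => if i = j' then (1 : ℝ) else 0) = Pi.single i 1 := by
      intro i; ext j'; simp [Pi.single_apply, eq_comm]
    rw [LinearMap.pi_apply_eq_sum_univ]
    refine Finset.sum_congr rfl fun i _ => ?_
    rw [h1 i, smul_eq_mul]
  have hsum_l : ∀ i, ∑ j, l i j = 0 := by
    intro i
    have h1 : ∑ j, b.coord j (0 + Pi.single i 1) = 1 := b.sum_coord_apply_eq_one _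
    have h2 : ∑ j, b.coord j 0 = 1 := b.sum_coord_apply_eq_one _
    simp only [hcoord_add, Finset.sum_add_distrib, h2] at h1
    linarith
  have hspos : ∀ i, 0 < s i := by
    intro i
    rcases (hs0 i).lt_or_eq with h | h
    · exact h
    exfalso
    have hmz : ∀ j, m i j = 0 := fun j =>
      (Finset.sum_eq_zero_iff_of_nonneg (fun j _ => hm0 i j)).mp h.symm j (mem_univ j)
    have hlnn : ∀ j, 0 ≤ l i j := by
      intro j
      have h2 : -(l i j) ≤ m i j := le_max_right _ _
      rw [hmz j] at h2; linarith
    have hlz : ∀ j, l i j = 0 := fun j =>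
      (Finset.sum_eq_zero_iff_of_nonneg (fun j _ => hlnn j)).mp (hsum_l i) j (mem_univ j)
    have heq : (0 : Fin n → ℝ) + Pi.single i 1 = 0 := by
      have h1 : ∀ j, b.coord j ((0 : Fin n → ℝ) + Pi.single i 1) = b.coord j 0 := by
        intro j; rw [hcoord_add]
        show b.coord j 0 + l i j = b.coord j 0
        rw [hlz j, add_zero]
      have h3 := b.affineCombination_coord_eq_self ((0 : Fin n → ℝ) + Pi.single i 1)
      rw [show (fun j => b.coord j ((0 : Fin n → ℝ) + Pi.single i 1)) = fun j => b.coord j 0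
        from funext h1, b.affineCombination_coord_eq_self] at h3
      exact h3.symm
    have := congrFun heq i
    simp at this
  -- d i = 1 / s i
  have hdi : ∀ i, d i = 1 / s i := by
    intro i
    refine (hd i).unique ⟨⟨by positivity, ?_⟩, ?_⟩
    · set w : Fin (n + 1) → ℝ := fun j => m i j / s i with hw
      have hw1 : ∑ j, w j = 1 := by
        rw [hw, ← Finset.sum_div]
        exact div_self (ne_of_gt (hspos i))
      refine ⟨Finset.univ.affineCombination ℝ x w, ?_, ?_⟩
      · exact affineCombination_mem_convexHull (fun j _ => by positivity) hw1
      · rw [hK]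
        intro j
        have hcw : b.coord j (Finset.univ.affineCombination ℝ x w) = w j :=
          b.coord_apply_combination_of_mem (mem_univ j) hw1
        rw [hcoord_add, hcw, LinearMap.map_smul, smul_eq_mul]
        show (0 : ℝ) ≤ m i j / s i + 1 / s i * l i j
        rcases le_or_gt 0 (l i j) with hc | hc
        · have h1 : (0:ℝ) ≤ m i j / s i := div_nonneg (hm0 i j) (hs0 i)
          have h2 : (0:ℝ) ≤ 1 / s i * l i j :=
            mul_nonneg (by positivity) hc
          linarith
        · have hmj : m i j = -(l i j) := max_eq_right (by linarith)
          rw [hmj]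
          have hsne : s i ≠ 0 := (hspos i).ne'
          field_simp
          norm_num
    · rintro t ⟨ht0, y, hy, hyt⟩
      rw [hK] at hy hyt
      have key : ∀ j, m i j * t ≤ b.coord j y := by
        intro j
        rcases le_or_gt 0 (l i j) with hc | hc
        · have hmj : m i j = 0 := max_eq_left (by linarith)
          rw [hmj, zero_mul]; exact hy j
        · have hmj : m i j = -(l i j) := max_eq_right (by linarith)
          have h3 := hyt j
          rw [hcoord_add, LinearMap.map_smul, smul_eq_mul] at h3
          rw [hmj]; nlinarith
      have hsum : s i * t ≤ 1 := by
        calc s i * t = ∑ j, m i j * t := by rw [hs]; exact Finset.sum_mul ..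
        _ ≤ ∑ j, b.coord j y := Finset.sum_le_sum fun j _ => key j
        _ = 1 := b.sum_coord_apply_eq_one y
      rw [le_div_iff₀ (hspos i)]
      linarith
  -- Part B : the least σ is T = ∑ i, s i
  set T : ℝ := ∑ i, s i with hT
  have hTpos : 0 < T := Finset.sum_pos (fun i _ => hspos i) Finset.univ_nonempty
  have hT2 : ∑ j, ∑ i, m i j = T := by rw [hT]; exact Finset.sum_comm
  have hlbT : ∀ σ ∈ {σ : ℝ | 0 < σ ∧ ∃ c : Fin n → ℝ,
      Set.Icc 0 1 ⊆ (fun y => σ • y + c) '' convexHull ℝ (Set.range x)}, T ≤ σ := by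
    rintro σ ⟨hσ, c, hsub⟩
    set v : Fin (n + 1) → Fin n → ℝ := fun j i => if l i j < 0 then 1 else 0 with hv
    have hvmem : ∀ j, v j ∈ Set.Icc (0 : Fin n → ℝ) 1 := by
      intro j
      constructor <;> intro i <;> simp only [hv, Pi.zero_apply, Pi.one_apply] <;>
        split <;> norm_num
    have key : ∀ j, 0 ≤ b.coord j (σ⁻¹ • (-c)) - σ⁻¹ * ∑ i, m i j := by
      intro j
      obtain ⟨z, hz, hze⟩ := hsub (hvmem j)
      have hze' : σ • z + c = v j := hze
      have hzeq : z = σ⁻¹ • (-c) + σ⁻¹ • v j := by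
        have h1 : σ • z = v j - c := eq_sub_of_add_eq hze'
        have h2 : z = σ⁻¹ • (σ • z) := by
          rw [smul_smul, inv_mul_cancel₀ hσ.ne', one_smul]
        rw [h2, h1, ← smul_add]
        congr 1
        abel
      rw [hK] at hz
      have h3 := hz j
      rw [hzeq, hcoord_add, LinearMap.map_smul, hlin, smul_eq_mul] at h3
      have hsv : ∑ i, v j i * l i j = -∑ i, m i j := by
        rw [← Finset.sum_neg_distrib]
        refine Finset.sum_congr rfl fun i _ => ?_
        by_cases hc : l i j < 0
        · have hmj : m i j = -(l i j) := max_eq_right (by linarith)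
          simp [hv, hc, hmj]
        · have hmj : m i j = 0 := max_eq_left (by push_neg at hc; linarith)
          simp [hv, hc, hmj]
      rw [hsv] at h3
      linarith
    have h4 : 0 ≤ ∑ j, (b.coord j (σ⁻¹ • (-c)) - σ⁻¹ * ∑ i, m i j) :=
      Finset.sum_nonneg fun j _ => key j
    rw [Finset.sum_sub_distrib, b.sum_coord_apply_eq_one, ← Finset.mul_sum, hT2] at h4
    nlinarith [mul_inv_cancel₀ hσ.ne']
  have hmemT : T ∈ {σ : ℝ | 0 < σ ∧ ∃ c : Fin n → ℝ,
      Set.Icc 0 1 ⊆ (fun y => σ • y + c) '' convexHull ℝ (Set.range x)} := by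
    set W : Fin (n + 1) → ℝ := fun j => (∑ i, m i j) / T with hW
    have hW1 : ∑ j, W j = 1 := by
      rw [hW, ← Finset.sum_div, hT2]
      exact div_self hTpos.ne'
    set p0 : Fin n → ℝ := Finset.univ.affineCombination ℝ x W with hp0
    refine ⟨hTpos, -(T • p0), fun y hy => ?_⟩
    refine ⟨p0 + T⁻¹ • y, ?_, ?_⟩
    · rw [hK]
      intro j
      have hcW : b.coord j p0 = W j := b.coord_apply_combination_of_mem (mem_univ j) hW1
      rw [hcoord_add, hcW, LinearMap.map_smul, hlin, smul_eq_mul]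
      have hterm : ∀ i, -(m i j) ≤ y i * l i j := by
        intro i
        rcases le_or_gt 0 (l i j) with hc | hc
        · have hmj : m i j = 0 := max_eq_left (by linarith)
          rw [hmj, neg_zero]
          exact mul_nonneg (by simpa using hy.1 i) hc
        · have hmj : m i j = -(l i j) := max_eq_right (by linarith)
          rw [hmj, neg_neg]
          have h1 : y i ≤ 1 := by simpa using hy.2 i
          nlinarith
      have h5 : -(∑ i, m i j) ≤ ∑ i, y i * l i j := by
        rw [← Finset.sum_neg_distrib]
        exact Finset.sum_le_sum fun i _ => hterm i
      have h6 : W j = T⁻¹ * ∑ i, m i j := by simp [hW, div_eq_inv_mul]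
      have h7 : T⁻¹ * -(∑ i, m i j) ≤ T⁻¹ * ∑ i, y i * l i j :=
        mul_le_mul_of_nonneg_left h5 (by positivity)
      rw [h6]
      nlinarith
    · show T • (p0 + T⁻¹ • y) + -(T • p0) = y
      rw [smul_add, smul_smul, mul_inv_cancel₀ hTpos.ne', one_smul]
      abel
  have haT : a = T := ha.unique ⟨hmemT, hlbT⟩
  rw [haT, hT]
  exact Finset.sum_congr rfl fun i _ => by rw [hdi i, one_div_one_div]
end

section
/- Let S ⊂ ℝⁿ be a nondegenerate n-dimensional simplex with vertices x^{(1)},…,x^{(n+1)}, node matrix A, and A^{-1}=(l_{ij}). Then α(S) = (1/2)·∑_{i=1}^{n} ∑_{j=1}^{n+1} |l_{ij}|, where α(S) is the minimal σ > 0 such that the unit cube Q_n = [0,1]^n is contained in some translate of σ·S. -/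
/-- For a nondegenerate n-dimensional simplex `S` with node
matrix `A` and `A⁻¹ = (l_ij)`, one has `α(S) = (1/2)·∑_i ∑_j |l_ij|`,
where `α(S)` is the least `σ > 0` such that the unit cube `[0,1]^n` is
contained in a translate of `σ·S`. -/
theorem alpha_eq_half_sum_abs_inverse_entries
    (n : ℕ) (x : Fin (n + 1) → (Fin n → ℝ))
    (hx : AffineIndependent ℝ x)
    (A : Matrix (Fin (n + 1)) (Fin (n + 1)) ℝ)
    (hA : ∀ (j : Fin (n + 1)) (i : Fin (n + 1)), A j i =
      if hi : (i : ℕ) < n then x j ⟨i, hi⟩ else 1)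
    (a : ℝ)
    (ha : IsLeast {σ : ℝ | 0 < σ ∧ ∃ c : Fin n → ℝ,
      Set.Icc 0 1 ⊆ (fun y => σ • y + c) '' convexHull ℝ (Set.range x)} a) :
    a = (1 / 2) * ∑ i : Fin n, ∑ j, |A⁻¹ i.castSucc j| := by
  obtain ⟨⟨ha0, c0, hc0⟩, hlb⟩ := ha
  -- trivial case n = 0
  rcases Nat.eq_zero_or_pos n with hn | hn
  · subst hn
    exfalso
    have hmem : a / 2 ∈ {σ : ℝ | 0 < σ ∧ ∃ c : Fin 0 → ℝ,
        Set.Icc 0 1 ⊆ (fun y => σ • y + c) '' convexHull ℝ (Set.range x)} := by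
      refine ⟨by linarith, c0, fun y _ => ⟨x 0, subset_convexHull ℝ _ ⟨0, rfl⟩,
        Subsingleton.elim _ _⟩⟩
    have := hlb hmem
    linarith
  -- basic matrix facts
  have hAc : ∀ (j : Fin (n+1)) (i : Fin n), A j i.castSucc = x j i := by
    intro j i; rw [hA]; simp [Fin.castSucc, Fin.is_lt]
  have hAl : ∀ j, A j (Fin.last n) = 1 := by
    intro j; rw [hA]; simp
  have hdet : A.det ≠ 0 := by
    intro h0
    obtain ⟨g, hg0, hgA⟩ := Matrix.exists_vecMul_eq_zero_iff.mpr h0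
    have hsum : ∑ j, g j = 0 := by
      have := congrFun hgA (Fin.last n)
      simpa [Matrix.vecMul, dotProduct, hAl] using this
    have hlin : ∀ i : Fin n, ∑ j, g j * x j i = 0 := by
      intro i
      have := congrFun hgA i.castSucc
      simpa [Matrix.vecMul, dotProduct, hAc] using this
    rw [affineIndependent_iff_of_fintype] at hx
    have hz : Finset.univ.weightedVSub x g = (0 : Fin n → ℝ) := by
      rw [Finset.weightedVSub_eq_linear_combination _ hsum]
      funext i
      simpa [Finset.sum_apply] using hlin i
    exact hg0 (funext fun j => hx g hsum hz j)
  have hU : IsUnit A.det := isUnit_iff_ne_zero.mpr hdet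
  have hALe : ∀ k j, ∑ m, A k m * A⁻¹ m j = if k = j then 1 else 0 := by
    intro k j
    have := congrFun (congrFun (Matrix.mul_nonsing_inv A hU) k) j
    simpa [Matrix.mul_apply, Matrix.one_apply] using this
  have hLAe : ∀ k j, ∑ m, A⁻¹ k m * A m j = if k = j then 1 else 0 := by
    intro k j
    have := congrFun (congrFun (Matrix.nonsing_inv_mul A hU) k) j
    simpa [Matrix.mul_apply, Matrix.one_apply] using this
  -- column sums of A⁻¹ (i.e. row sums of each row of A⁻¹)
  have hcol : ∀ k, ∑ j, A⁻¹ k j = if k = Fin.last n then 1 else 0 := by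
    intro k
    have := hLAe k (Fin.last n)
    simpa [hAl] using this
  have hcolc : ∀ i : Fin n, ∑ j, A⁻¹ i.castSucc j = 0 := by
    intro i
    rw [hcol]
    simp [(Fin.castSucc_lt_last i).ne]
  -- the barycentric coordinate map
  set lam : (Fin n → ℝ) → Fin (n+1) → ℝ :=
    fun q j => (∑ i : Fin n, q i * A⁻¹ i.castSucc j) + A⁻¹ (Fin.last n) j with hlam
  have hlam_sum : ∀ q, ∑ j, lam q j = 1 := by
    intro q
    rw [hlam]
    simp only
    rw [Finset.sum_add_distrib, Finset.sum_comm]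
    have h1 : ∑ i : Fin n, ∑ j, q i * A⁻¹ i.castSucc j = 0 := by
      refine Finset.sum_eq_zero fun i _ => ?_
      rw [← Finset.mul_sum, hcolc i, mul_zero]
    rw [h1, hcol]
    simp
  have hsplit : ∀ (k j : Fin (n+1)),
      ∑ i : Fin n, A k i.castSucc * A⁻¹ i.castSucc j
        = (if k = j then 1 else 0) - A⁻¹ (Fin.last n) j := by
    intro k j
    have := hALe k j
    rw [Fin.sum_univ_castSucc] at this
    rw [hAl] at this
    linarith
  -- points of the hull have nonnegative barycentric coordinates
  have hmem_nonneg : ∀ q ∈ convexHull ℝ (Set.range x), ∀ j, 0 ≤ lam q j := by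
    intro q hq j
    have hset : convexHull ℝ (Set.range x) ⊆ {q | 0 ≤ lam q j} := by
      apply convexHull_min
      · rintro _ ⟨k, rfl⟩
        show (0:ℝ) ≤ lam (x k) j
        have : lam (x k) j = if k = j then 1 else 0 := by
          rw [hlam]
          simp only
          have : ∑ i : Fin n, x k i * A⁻¹ i.castSucc j
              = ∑ i : Fin n, A k i.castSucc * A⁻¹ i.castSucc j := by
            refine Finset.sum_congr rfl fun i _ => by rw [hAc]
          rw [this, hsplit]
          ring
        rw [this]; positivity
      · intro q1 hq1 q2 hq2 s t hs ht hst
        show (0:ℝ) ≤ lam (s • q1 + t • q2) j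
        have : lam (s • q1 + t • q2) j = s * lam q1 j + t * lam q2 j := by
          rw [hlam]
          simp only [Pi.add_apply, Pi.smul_apply, smul_eq_mul]
          rw [show ∑ i : Fin n, (s * q1 i + t * q2 i) * A⁻¹ i.castSucc j
              = s * ∑ i : Fin n, q1 i * A⁻¹ i.castSucc j
                + t * ∑ i : Fin n, q2 i * A⁻¹ i.castSucc j by
            rw [Finset.mul_sum, Finset.mul_sum, ← Finset.sum_add_distrib]
            exact Finset.sum_congr rfl fun i _ => by ring]
          linear_combination (-A⁻¹ (Fin.last n) j) * hst
        rw [this]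
        exact add_nonneg (mul_nonneg hs hq1) (mul_nonneg ht hq2)
    exact hset hq
  -- points with nonnegative barycentric coordinates are in the hull
  have hrep : ∀ q : Fin n → ℝ, (∀ j, 0 ≤ lam q j) → q ∈ convexHull ℝ (Set.range x) := by
    intro q hpos
    have hq : q = ∑ j, lam q j • x j := by
      funext i
      rw [Finset.sum_apply]
      simp only [Pi.smul_apply, smul_eq_mul]
      have : ∀ j, lam q j * x j i = lam q j * A j i.castSucc := by
        intro j; rw [hAc]
      simp only [this]
      have expand : ∑ j, lam q j * A j i.castSucc
          = (∑ i' : Fin n, q i' * ∑ j, A⁻¹ i'.castSucc j * A j i.castSucc)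
            + ∑ j, A⁻¹ (Fin.last n) j * A j i.castSucc := by
        rw [hlam]
        simp only
        have step1 : ∀ j' : Fin (n+1),
            (∑ i' : Fin n, q i' * A⁻¹ i'.castSucc j' + A⁻¹ (Fin.last n) j') * A j' i.castSucc
            = (∑ i' : Fin n, q i' * (A⁻¹ i'.castSucc j' * A j' i.castSucc))
              + A⁻¹ (Fin.last n) j' * A j' i.castSucc := by
          intro j'
          rw [add_mul, Finset.sum_mul]
          congr 1
          exact Finset.sum_congr rfl fun i' _ => by ring
        simp only [step1]
        rw [Finset.sum_add_distrib]
        congr 1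
        rw [Finset.sum_comm]
        exact Finset.sum_congr rfl fun i' _ => by rw [Finset.mul_sum]
      rw [expand, hLAe]
      have : ∑ i' : Fin n, q i' * ∑ j, A⁻¹ i'.castSucc j * A j i.castSucc = q i := by
        have : ∀ i' : Fin n, q i' * ∑ j, A⁻¹ i'.castSucc j * A j i.castSucc
            = if i' = i then q i else 0 := by
          intro i'
          rw [hLAe]
          by_cases h : i' = i
          · subst h; simp
          · have : i'.castSucc ≠ i.castSucc := by
              simpa using fun hh => h (Fin.castSucc_injective n hh)
            simp [this, h]
        simp only [this]
        simp
      rw [this]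
      simp [(Fin.castSucc_lt_last i).ne']
    rw [hq]
    have := Finset.centerMass_mem_convexHull (Finset.univ : Finset (Fin (n+1)))
      (w := lam q) (fun j _ => hpos j) (by rw [hlam_sum q]; norm_num)
      (z := x) (fun j _ => Set.mem_range_self j)
    rwa [Finset.centerMass_eq_of_sum_1 _ _ (hlam_sum q)] at this

  -- total absolute sum
  set T : ℝ := ∑ i : Fin n, ∑ j, |A⁻¹ i.castSucc j| with hT
  have hTnn : ∀ (i : Fin n), (0:ℝ) ≤ ∑ j, |A⁻¹ i.castSucc j| :=
    fun i => Finset.sum_nonneg fun j _ => abs_nonneg _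
  have hT0 : 0 < T := by
    have i0 : Fin n := ⟨0, hn⟩
    have hrow : 0 < ∑ j, |A⁻¹ i0.castSucc j| := by
      rcases (hTnn i0).lt_or_eq with h | h
      · exact h
      · exfalso
        have hz : ∀ j, A⁻¹ i0.castSucc j = 0 := by
          intro j
          exact abs_eq_zero.mp
            ((Finset.sum_eq_zero_iff_of_nonneg (fun j _ => abs_nonneg _)).mp h.symm j
              (Finset.mem_univ j))
        have := hLAe i0.castSucc i0.castSucc
        simp [hz] at this
    calc (0:ℝ) < ∑ j, |A⁻¹ i0.castSucc j| := hrow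
    _ ≤ T := Finset.single_le_sum (fun i _ => hTnn i) (Finset.mem_univ i0)
  -- lower bound
  have hlow : ∀ σ : ℝ, 0 < σ → ∀ c : Fin n → ℝ,
      (Set.Icc 0 1 ⊆ (fun y => σ • y + c) '' convexHull ℝ (Set.range x)) → T / 2 ≤ σ := by
    intro σ hσ c hsub
    have hJ : ∀ j : Fin (n+1),
        0 ≤ (∑ i : Fin n, ((A⁻¹ i.castSucc j - |A⁻¹ i.castSucc j|)/2 - c i * A⁻¹ i.castSucc j))
          + σ * A⁻¹ (Fin.last n) j := by
      intro j
      set yv : Fin n → ℝ := fun i => if A⁻¹ i.castSucc j < 0 then 1 else 0 with hyv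
      have hymem : yv ∈ Set.Icc (0 : Fin n → ℝ) 1 := by
        rw [Set.mem_Icc]
        constructor <;> rw [Pi.le_def] <;> intro i <;>
          simp only [hyv, Pi.zero_apply, Pi.one_apply] <;> split <;> norm_num
      obtain ⟨p, hp, hpe⟩ := hsub hymem
      have hpi : ∀ i, p i = (yv i - c i) / σ := by
        intro i
        have h := congrFun hpe i
        simp only [Pi.add_apply, Pi.smul_apply, smul_eq_mul] at h
        field_simp
        linarith
      have h0 := hmem_nonneg p hp j
      rw [hlam] at h0
      simp only [hpi] at h0
      have hS : ∑ i : Fin n, (yv i - c i) / σ * A⁻¹ i.castSucc j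
          = σ⁻¹ * ∑ i : Fin n, (yv i - c i) * A⁻¹ i.castSucc j := by
        rw [Finset.mul_sum]
        exact Finset.sum_congr rfl fun i _ => by ring
      rw [hS] at h0
      have h1 : 0 ≤ (∑ i : Fin n, (yv i - c i) * A⁻¹ i.castSucc j)
          + σ * A⁻¹ (Fin.last n) j := by
        have h2 := mul_nonneg hσ.le h0
        rw [mul_add, ← mul_assoc, mul_inv_cancel₀ hσ.ne', one_mul] at h2
        exact h2
      have hterm : ∀ i : Fin n, (yv i - c i) * A⁻¹ i.castSucc j
          = (A⁻¹ i.castSucc j - |A⁻¹ i.castSucc j|)/2 - c i * A⁻¹ i.castSucc j := by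
        intro i
        simp only [hyv]
        rcases lt_or_ge (A⁻¹ i.castSucc j) 0 with h | h
        · rw [if_pos h, abs_of_neg h]; ring
        · rw [if_neg (not_lt.mpr h), abs_of_nonneg h]; ring
      rwa [Finset.sum_congr rfl (fun i _ => hterm i)] at h1
    have hsumJ := Finset.sum_nonneg (fun j (_ : j ∈ Finset.univ) => hJ j)
    have htot : ∑ j, ((∑ i : Fin n,
          ((A⁻¹ i.castSucc j - |A⁻¹ i.castSucc j|)/2 - c i * A⁻¹ i.castSucc j))
          + σ * A⁻¹ (Fin.last n) j) = σ - T/2 := by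
      rw [Finset.sum_add_distrib, ← Finset.mul_sum, hcol]
      rw [if_pos rfl, Finset.sum_comm]
      have hrowsum : ∀ i : Fin n, ∑ j, ((A⁻¹ i.castSucc j - |A⁻¹ i.castSucc j|)/2
          - c i * A⁻¹ i.castSucc j) = (-1/2) * ∑ j, |A⁻¹ i.castSucc j| := by
        intro i
        rw [Finset.sum_sub_distrib, ← Finset.sum_div, Finset.sum_sub_distrib, hcolc i,
          ← Finset.mul_sum, hcolc i]
        ring
      rw [Finset.sum_congr rfl (fun i _ => hrowsum i), ← Finset.mul_sum, ← hT]
      ring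
    rw [htot] at hsumJ
    linarith
  -- upper bound : T/2 belongs to the set
  have hσ : 0 < T / 2 := by linarith
  have hup : a ≤ T / 2 := by
    apply hlb
    set σ : ℝ := T / 2 with hσdef
    set w : Fin (n+1) → ℝ := fun j => (∑ i : Fin n, |A⁻¹ i.castSucc j|) / T with hw
    have hw0 : ∀ j, 0 ≤ w j :=
      fun j => div_nonneg (Finset.sum_nonneg fun i _ => abs_nonneg _) hT0.le
    have hwsum : ∑ j, w j = 1 := by
      simp only [hw]
      rw [← Finset.sum_div, Finset.sum_comm, ← hT, div_self hT0.ne']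
    set p₀ : Fin n → ℝ := ∑ j, w j • x j with hp₀
    have hp₀i : ∀ i, p₀ i = ∑ k, w k * A k i.castSucc := by
      intro i
      rw [hp₀, Finset.sum_apply]
      exact Finset.sum_congr rfl fun k _ => by rw [Pi.smul_apply, smul_eq_mul, hAc]
    have hstar : ∀ j, (∑ i : Fin n, p₀ i * A⁻¹ i.castSucc j) + A⁻¹ (Fin.last n) j = w j := by
      intro j
      have h1 : ∑ i : Fin n, p₀ i * A⁻¹ i.castSucc j
          = ∑ k, w k * ((if k = j then 1 else 0) - A⁻¹ (Fin.last n) j) := by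
        calc ∑ i : Fin n, p₀ i * A⁻¹ i.castSucc j
            = ∑ i : Fin n, ∑ k, w k * (A k i.castSucc * A⁻¹ i.castSucc j) := by
              refine Finset.sum_congr rfl fun i _ => ?_
              rw [hp₀i i, Finset.sum_mul]
              exact Finset.sum_congr rfl fun k _ => by ring
          _ = ∑ k, w k * ∑ i : Fin n, A k i.castSucc * A⁻¹ i.castSucc j := by
              rw [Finset.sum_comm]
              exact Finset.sum_congr rfl fun k _ => by rw [Finset.mul_sum]
          _ = ∑ k, w k * ((if k = j then 1 else 0) - A⁻¹ (Fin.last n) j) :=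
              Finset.sum_congr rfl fun k _ => by rw [hsplit]
      rw [h1]
      have h2 : ∑ k, w k * ((if k = j then 1 else 0) - A⁻¹ (Fin.last n) j)
          = w j - (∑ k, w k) * A⁻¹ (Fin.last n) j := by
        simp only [mul_sub, mul_ite, mul_one, mul_zero]
        rw [Finset.sum_sub_distrib, Finset.sum_ite_eq' Finset.univ j w, ← Finset.sum_mul]
        simp
      rw [h2, hwsum]
      ring
    set cc : Fin n → ℝ := (fun _ => (1:ℝ)/2) - σ • p₀ with hcc
    refine ⟨hσ, cc, fun y hy => ?_⟩
    have hy1 : ∀ i, 0 ≤ y i := fun i => hy.1 i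
    have hy2 : ∀ i, y i ≤ 1 := fun i => hy.2 i
    refine ⟨σ⁻¹ • (y - cc), ?_, ?_⟩
    swap
    · show σ • (σ⁻¹ • _) + _ = y
      rw [smul_smul, mul_inv_cancel₀ hσ.ne', one_smul, sub_add_cancel]
    apply hrep
    intro j
    have hqi : ∀ i : Fin n, (σ⁻¹ • (y - cc)) i
        = σ⁻¹ * (y i - 1/2) + p₀ i := by
      intro i
      simp only [hcc, Pi.smul_apply, Pi.sub_apply, smul_eq_mul]
      field_simp
      ring
    have hlamq : lam (σ⁻¹ • (y - cc)) j
        = σ⁻¹ * (∑ i : Fin n, (y i - 1/2) * A⁻¹ i.castSucc j) + w j := by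
      rw [hlam]
      simp only [hqi]
      have h3 : ∑ i : Fin n, (σ⁻¹ * (y i - 1/2) + p₀ i) * A⁻¹ i.castSucc j
          = σ⁻¹ * (∑ i : Fin n, (y i - 1/2) * A⁻¹ i.castSucc j)
            + ∑ i : Fin n, p₀ i * A⁻¹ i.castSucc j := by
        rw [Finset.mul_sum, ← Finset.sum_add_distrib]
        exact Finset.sum_congr rfl fun i _ => by ring
      rw [h3, add_assoc, hstar j]
    rw [hlamq]
    have hSb : |∑ i : Fin n, (y i - 1/2) * A⁻¹ i.castSucc j| ≤ σ * w j := by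
      calc |∑ i : Fin n, (y i - 1/2) * A⁻¹ i.castSucc j|
          ≤ ∑ i : Fin n, |(y i - 1/2) * A⁻¹ i.castSucc j| :=
            Finset.abs_sum_le_sum_abs _ _
        _ ≤ ∑ i : Fin n, (1/2) * |A⁻¹ i.castSucc j| := by
            refine Finset.sum_le_sum fun i _ => ?_
            rw [abs_mul]
            refine mul_le_mul_of_nonneg_right ?_ (abs_nonneg _)
            rw [abs_le]
            constructor
            · linarith [hy1 i]
            · linarith [hy2 i]
        _ = σ * w j := by
            rw [← Finset.mul_sum]
            simp only [hw, hσdef]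
            field_simp
    have hle := (abs_le.mp hSb).1
    have hσinv : (0:ℝ) ≤ σ⁻¹ := inv_nonneg.mpr hσ.le
    have h4 : σ⁻¹ * (-(σ * w j)) ≤ σ⁻¹ * ∑ i : Fin n, (y i - 1/2) * A⁻¹ i.castSucc j :=
      mul_le_mul_of_nonneg_left hle hσinv
    have h5 : σ⁻¹ * (σ * w j) = w j := by
      field_simp
    nlinarith [h4, h5]
  have hge : T / 2 ≤ a := hlow a ha0 c0 hc0
  linarith
end

section
/- Let S ⊂ Q_n = [0,1]^n be a nondegenerate n-dimensional simplex of maximum possible Lebesgue volume among all n-dimensional simplices contained in Q_n. Then all axial diameters of S equal one: d_1(S) = d_2(S) = … = d_n(S) = 1. -/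
open MeasureTheory

lemma det_aux {n : ℕ} (f : (Fin n → ℝ) →ₗ[ℝ] ℝ) (w : Fin n → ℝ) :
    LinearMap.det (LinearMap.id + (LinearMap.toSpanSingleton ℝ (Fin n → ℝ) w).comp f)
      = 1 + f w := by
  classical
  set β := Pi.basisFun ℝ (Fin n)
  rw [← LinearMap.det_toMatrix β]
  have h : LinearMap.toMatrix β β
        (LinearMap.id + (LinearMap.toSpanSingleton ℝ (Fin n → ℝ) w).comp f)
      = 1 + Matrix.replicateCol (Fin 1) w * Matrix.replicateRow (Fin 1) (fun l => f (β l)) := by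
    ext k l
    simp [LinearMap.toMatrix_apply, Matrix.one_apply, LinearMap.toSpanSingleton_apply,
      Matrix.mul_apply, Pi.single_apply, eq_comm, mul_comm, β, Pi.basisFun_repr,
      Finsupp.single_apply]
  rw [h]; erw [Matrix.det_one_add_replicateCol_mul_replicateRow (ι := Fin 1)]
  congr 1
  rw [dotProduct]
  rw [LinearMap.pi_apply_eq_sum_univ f w]
  refine Finset.sum_congr rfl fun j _ => ?_
  have hb : (fun j1 => if j = j1 then (1:ℝ) else 0) = Pi.single j 1 := by
    ext t; simp [Pi.single_apply, eq_comm]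
  have hbb : (β j : Fin n → ℝ) = Pi.single j 1 := by
    ext t; simp [β, Pi.single_apply, eq_comm]
  rw [hb, hbb, smul_eq_mul, mul_comm]

lemma replace_bound {n : ℕ} (x : Fin (n+1) → (Fin n → ℝ)) (hx : AffineIndependent ℝ x)
    (b : AffineBasis (Fin (n+1)) ℝ (Fin n → ℝ)) (hb : ⇑b = x)
    (hub : ∀ (y' : Fin (n+1) → Fin n → ℝ), AffineIndependent ℝ y' →
      convexHull ℝ (Set.range y') ⊆ Set.Icc 0 1 →
      (volume (convexHull ℝ (Set.range y'))).toReal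
        ≤ (volume (convexHull ℝ (Set.range x))).toReal)
    (hcube : convexHull ℝ (Set.range x) ⊆ Set.Icc 0 1)
    (hVpos : 0 < (volume (convexHull ℝ (Set.range x))).toReal)
    (j : Fin (n+1)) (y : Fin n → ℝ) (hy : y ∈ Set.Icc 0 1) :
    |b.coord j y| ≤ 1 := by
  classical
  set S := convexHull ℝ (Set.range x) with hS
  set c := b.coord j y with hc
  rcases eq_or_ne c 0 with h0 | h0
  · rw [h0]; norm_num
  set w : Fin n → ℝ := y - x j with hw
  set f := (b.coord j).linear with hf
  set L := LinearMap.id + (LinearMap.toSpanSingleton ℝ (Fin n → ℝ) w).comp f with hL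
  have hcv : ∀ (p v : Fin n → ℝ), b.coord j (v + p) = f v + b.coord j p := by
    intro p v
    have h := (b.coord j).map_vadd p v
    rw [vadd_eq_add, vadd_eq_add] at h
    exact h
  have hxj1 : b.coord j (x j) = 1 := by rw [← hb]; exact b.coord_apply_eq j
  have hfw : f w = c - 1 := by
    have h1 := hcv (x j) w
    have h2 : w + x j = y := by simp [hw]
    rw [h2, hxj1] at h1
    show f w = b.coord j y - 1
    linarith
  have hdet : LinearMap.det L = c := by
    show LinearMap.det L = b.coord j y
    rw [hL, det_aux]
    have : f w = b.coord j y - 1 := hfw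
    rw [this]; ring
  let A : (Fin n → ℝ) →ᵃ[ℝ] (Fin n → ℝ) :=
    { toFun := fun p => p + (b.coord j p) • w
      linear := L
      map_vadd' := by
        intro p v
        show (v + p) + (b.coord j (v + p)) • w = (v + f v • w) + (p + (b.coord j p) • w)
        rw [hcv, add_smul]
        abel }
  have hAx : (⇑A) ∘ x = Function.update x j y := by
    funext k
    rcases eq_or_ne k j with rfl | hkj
    · show x k + (b.coord k (x k)) • w = _
      rw [hxj1, Function.update_self, one_smul, hw]
      abel
    · show x k + (b.coord j (x k)) • w = _
      have : b.coord j (x k) = 0 := by rw [← hb]; exact b.coord_apply_ne (Ne.symm hkj)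
      rw [this, Function.update_of_ne hkj, zero_smul, add_zero]
  have hLinj : Function.Injective L := by
    have hd : LinearMap.det L ≠ 0 := by rw [hdet]; exact h0
    intro p q hpq
    exact (L.equivOfDetNeZero hd).injective (by simpa using hpq)
  have hAinj : Function.Injective A := A.linear_injective_iff.mp hLinj
  have hAI' : AffineIndependent ℝ (Function.update x j y) := by
    rw [← hAx]; exact hx.map' A hAinj
  have hmem : ∀ k, x k ∈ Set.Icc (0 : Fin n → ℝ) 1 := fun k =>
    hcube (subset_convexHull ℝ _ (Set.mem_range_self k))
  have hull' : convexHull ℝ (Set.range (Function.update x j y)) ⊆ Set.Icc 0 1 := by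
    apply convexHull_min _ (convex_Icc _ _)
    rintro p ⟨k, rfl⟩
    rcases eq_or_ne k j with rfl | hkj
    · rw [Function.update_self]; exact hy
    · rw [Function.update_of_ne hkj]; exact hmem k
  have himg : convexHull ℝ (Set.range (Function.update x j y)) = ⇑A '' S := by
    rw [← hAx, Set.range_comp, hS, AffineMap.image_convexHull]
  have hvol : volume (⇑A '' S) = ENNReal.ofReal |c| * volume S := by
    have hAeq : ⇑A = fun p => (b.coord j 0) • w + L p := by
      funext p
      show p + (b.coord j p) • w = _
      have h1 : b.coord j p = f p + b.coord j 0 := by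
        have := hcv 0 p; simpa using this
      show p + (b.coord j p) • w = (b.coord j 0) • w + (p + f p • w)
      rw [h1, add_smul]
      abel
    rw [hAeq]
    have h2 : (fun p => (b.coord j 0) • w + L p) '' S
        = (fun q => (b.coord j 0) • w + q) '' (⇑L '' S) := (Set.image_image _ _ _).symm
    rw [h2, Set.image_add_left, measure_preimage_add,
      Measure.addHaar_image_linearMap, hdet]
  have hle := hub (Function.update x j y) hAI' hull'
  rw [himg, hvol] at hle
  have hfin : volume S ≠ ⊤ := by
    have : volume S ≤ volume (Set.Icc (0 : Fin n → ℝ) 1) := measure_mono hcube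
    refine ne_top_of_le_ne_top ?_ this
    rw [Real.volume_Icc_pi]
    exact ENNReal.prod_ne_top fun i _ => ENNReal.ofReal_ne_top
  rw [ENNReal.toReal_mul, ENNReal.toReal_ofReal (abs_nonneg c)] at hle
  have := hVpos
  nlinarith [hle, hVpos]

/-- A nondegenerate n-dimensional simplex `S ⊆ Q_n = [0,1]^n`
of maximum possible volume among all n-dimensional simplices contained in
`Q_n` has all axial diameters equal to one. -/
theorem max_volume_simplex_axial_diameters_eq_one
    (n : ℕ) (ν : ℝ)
    (hν : IsGreatest {v : ℝ | ∃ y : Fin (n + 1) → (Fin n → ℝ),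
      AffineIndependent ℝ y ∧
      convexHull ℝ (Set.range y) ⊆ Set.Icc 0 1 ∧
      v = (volume (convexHull ℝ (Set.range y))).toReal} ν)
    (x : Fin (n + 1) → (Fin n → ℝ))
    (hx : AffineIndependent ℝ x)
    (hcube : convexHull ℝ (Set.range x) ⊆ Set.Icc 0 1)
    (hmax : (volume (convexHull ℝ (Set.range x))).toReal = ν)
    (d : Fin n → ℝ)
    (hd : ∀ i : Fin n, IsGreatest {t : ℝ | 0 ≤ t ∧ ∃ y ∈ convexHull ℝ (Set.range x),
      y + t • (Pi.single i 1 : Fin n → ℝ) ∈ convexHull ℝ (Set.range x)} (d i)) :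
    ∀ i, d i = 1 := by
  classical
  intro i
  have hcard : Fintype.card (Fin (n+1)) = Module.finrank ℝ (Fin n → ℝ) + 1 := by
    simp [Module.finrank_fin_fun]
  have htop : affineSpan ℝ (Set.range x) = ⊤ :=
    hx.affineSpan_eq_top_iff_card_eq_finrank_add_one.mpr hcard
  let b : AffineBasis (Fin (n+1)) ℝ (Fin n → ℝ) := ⟨x, hx, htop⟩
  have hb : ⇑b = x := rfl
  set S := convexHull ℝ (Set.range x) with hS
  have hSint : (interior S).Nonempty := by
    have h := b.centroid_mem_interior_convexHull
    rw [hb] at h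
    exact ⟨_, h⟩
  have hfin : volume S ≠ ⊤ := by
    have hle : volume S ≤ volume (Set.Icc (0 : Fin n → ℝ) 1) := measure_mono hcube
    refine ne_top_of_le_ne_top ?_ hle
    rw [Real.volume_Icc_pi]
    exact ENNReal.prod_ne_top fun t _ => ENNReal.ofReal_ne_top
  have hVpos : 0 < (volume S).toReal :=
    ENNReal.toReal_pos (Measure.measure_pos_of_nonempty_interior _ hSint).ne' hfin
  have hub : ∀ (y' : Fin (n+1) → Fin n → ℝ), AffineIndependent ℝ y' →
      convexHull ℝ (Set.range y') ⊆ Set.Icc 0 1 →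
      (volume (convexHull ℝ (Set.range y'))).toReal ≤ (volume S).toReal := by
    intro y' h1 h2
    have h3 := hν.2 ⟨y', h1, h2, rfl⟩
    rw [hmax]
    exact h3
  have key : ∀ (j : Fin (n+1)) (y : Fin n → ℝ), y ∈ Set.Icc 0 1 → |b.coord j y| ≤ 1 :=
    replace_bound x hx b hb hub hcube hVpos
  set m : Fin (n+1) → ℝ := fun j => (b.coord j).linear (Pi.single i 1) with hm
  have hcv : ∀ (j : Fin (n+1)) (p v : Fin n → ℝ),
      b.coord j (v + p) = (b.coord j).linear v + b.coord j p := by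
    intro j p v
    have h := (b.coord j).map_vadd p v
    rw [vadd_eq_add, vadd_eq_add] at h
    exact h
  have hrep : ∀ p : Fin n → ℝ, ∑ j, b.coord j p • x j = p := by
    intro p
    have h := b.linear_combination_coord_eq_self p
    rw [hb] at h
    exact h
  have hmval : ∀ j, m j = b.coord j (Pi.single i 1 + 0) - b.coord j 0 := by
    intro j
    rw [hcv]
    ring
  have hsum0 : ∑ j, m j = 0 := by
    have h1 := b.sum_coord_apply_eq_one (Pi.single i 1 + 0)
    have h0 := b.sum_coord_apply_eq_one (0 : Fin n → ℝ)
    calc ∑ j, m j = ∑ j, (b.coord j (Pi.single i 1 + 0) - b.coord j 0) :=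
          Finset.sum_congr rfl fun j _ => hmval j
      _ = 0 := by rw [Finset.sum_sub_distrib, h1, h0]; ring
  have hei : ∑ j, m j • x j = Pi.single i 1 := by
    calc ∑ j, m j • x j
        = ∑ j, (b.coord j (Pi.single i 1 + 0) • x j - b.coord j 0 • x j) :=
          Finset.sum_congr rfl fun j _ => by rw [hmval j, sub_smul]
      _ = (Pi.single i 1 + 0) - 0 := by
          rw [Finset.sum_sub_distrib, hrep, hrep]
      _ = Pi.single i 1 := by simp
  have hcoordi : ∑ j, m j * x j i = 1 := by
    have h := congrFun hei i
    simpa [Finset.sum_apply] using h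
  have hmem : ∀ k, x k ∈ Set.Icc (0 : Fin n → ℝ) 1 := fun k =>
    hcube (subset_convexHull ℝ _ (Set.mem_range_self k))
  have hcoordy : ∀ (j : Fin (n+1)) (s : ℝ),
      b.coord j (s • (Pi.single i 1 : Fin n → ℝ) + x j) = 1 + s * m j := by
    intro j s
    rw [hcv]
    have h1 : b.coord j (x j) = 1 := by rw [← hb]; exact b.coord_apply_eq j
    rw [h1, (b.coord j).linear.map_smul, smul_eq_mul, hm]
    ring
  have hpos1 : ∀ j, 0 < m j → x j i = 1 := by
    intro j hj
    by_contra hne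
    have hxle : x j i ≤ 1 := (hmem j).2 i
    have hxlt : x j i < 1 := lt_of_le_of_ne hxle hne
    set y := (1 - x j i) • (Pi.single i 1 : Fin n → ℝ) + x j with hy
    have hyI : y ∈ Set.Icc (0 : Fin n → ℝ) 1 := by
      constructor <;> intro t <;> by_cases ht : t = i
      · rw [ht]
        simp only [hy, Pi.add_apply, Pi.smul_apply, Pi.single_eq_same, smul_eq_mul]
        have := ((hmem j).1 i); simp only [Pi.zero_apply] at this ⊢; nlinarith
      · simp only [hy, Pi.add_apply, Pi.smul_apply, Pi.single_eq_of_ne ht, smul_eq_mul,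
          mul_zero, zero_add]
        exact (hmem j).1 t
      · rw [ht]
        simp only [hy, Pi.add_apply, Pi.smul_apply, Pi.single_eq_same, smul_eq_mul, Pi.one_apply]
        nlinarith
      · simp only [hy, Pi.add_apply, Pi.smul_apply, Pi.single_eq_of_ne ht, smul_eq_mul,
          mul_zero, zero_add, Pi.one_apply]
        exact (hmem j).2 t
    have hk := key j y hyI
    rw [hy, hcoordy j (1 - x j i)] at hk
    rw [abs_le] at hk
    nlinarith [hk.2, mul_pos (by linarith : (0:ℝ) < 1 - x j i) hj]
  have hneg0 : ∀ j, m j < 0 → x j i = 0 := by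
    intro j hj
    by_contra hne
    have hxge : 0 ≤ x j i := (hmem j).1 i
    have hxgt : 0 < x j i := lt_of_le_of_ne hxge (Ne.symm hne)
    set y := (-(x j i)) • (Pi.single i 1 : Fin n → ℝ) + x j with hy
    have hyI : y ∈ Set.Icc (0 : Fin n → ℝ) 1 := by
      constructor <;> intro t <;> by_cases ht : t = i
      · rw [ht]
        simp only [hy, Pi.add_apply, Pi.smul_apply, Pi.single_eq_same, smul_eq_mul,
          Pi.zero_apply]
        nlinarith
      · simp only [hy, Pi.add_apply, Pi.smul_apply, Pi.single_eq_of_ne ht, smul_eq_mul,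
          mul_zero, zero_add]
        exact (hmem j).1 t
      · rw [ht]
        simp only [hy, Pi.add_apply, Pi.smul_apply, Pi.single_eq_same, smul_eq_mul, Pi.one_apply]
        nlinarith
      · simp only [hy, Pi.add_apply, Pi.smul_apply, Pi.single_eq_of_ne ht, smul_eq_mul,
          mul_zero, zero_add, Pi.one_apply]
        exact (hmem j).2 t
    have hk := key j y hyI
    rw [hy, hcoordy j (-(x j i))] at hk
    rw [abs_le] at hk
    nlinarith [hk.2, mul_pos hxgt (by linarith : (0:ℝ) < -(m j))]
  have hmaxsum : ∑ j, max (m j) 0 = 1 := by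
    rw [← hcoordi]
    refine Finset.sum_congr rfl fun j _ => ?_
    rcases lt_trichotomy (m j) 0 with h | h | h
    · rw [hneg0 j h, max_eq_right h.le, mul_zero]
    · rw [h]; simp
    · rw [hpos1 j h, max_eq_left h.le, mul_one]
  have hmaxsum' : ∑ j, max (-(m j)) 0 = 1 := by
    have hterm : ∀ j, max (-(m j)) 0 = max (m j) 0 - m j := by
      intro j
      rcases le_total (m j) 0 with h | h
      · rw [max_eq_left (by linarith), max_eq_right h]; ring
      · rw [max_eq_right (by linarith), max_eq_left h]; ring
    rw [Finset.sum_congr rfl fun j _ => hterm j, Finset.sum_sub_distrib, hmaxsum, hsum0]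
    ring
  set z := ∑ j, max (-(m j)) 0 • x j with hz
  have hzS : z ∈ S := by
    have h := affineCombination_mem_convexHull (R := ℝ) (s := Finset.univ) (v := x)
      (w := fun j => max (-(m j)) 0) (fun j _ => le_max_right _ _) hmaxsum'
    rwa [Finset.univ.affineCombination_eq_linear_combination _ _ hmaxsum'] at h
  have hz1S : z + Pi.single i 1 ∈ S := by
    have he : z + Pi.single i 1 = ∑ j, max (m j) 0 • x j := by
      rw [hz, ← hei, ← Finset.sum_add_distrib]
      refine Finset.sum_congr rfl fun j _ => ?_
      rw [← add_smul]
      congr 1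
      rcases le_total (m j) 0 with h | h
      · rw [max_eq_left (by linarith), max_eq_right h]; ring
      · rw [max_eq_right (by linarith), max_eq_left h]; ring
    rw [he]
    have h := affineCombination_mem_convexHull (R := ℝ) (s := Finset.univ) (v := x)
      (w := fun j => max (m j) 0) (fun j _ => le_max_right _ _) hmaxsum
    rwa [Finset.univ.affineCombination_eq_linear_combination _ _ hmaxsum] at h
  have h1le : 1 ≤ d i := (hd i).2 ⟨zero_le_one, z, hzS, by simpa using hz1S⟩
  obtain ⟨hd0, y0, hy0, hy0'⟩ := (hd i).1
  have ha : (0:ℝ) ≤ y0 i := (hcube hy0).1 i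
  have hbd := (hcube hy0').2 i
  simp only [Pi.add_apply, Pi.smul_apply, Pi.single_eq_same, smul_eq_mul, mul_one,
    Pi.one_apply] at hbd
  linarith
end

section
/- Let S ⊆ Q_n = [0,1]^n be a nondegenerate n-dimensional simplex. Then α(S) ≥ n, where α(S) is the minimal σ > 0 such that Q_n is contained in some translate of σ·S; consequently ξ(S) ≥ n, where ξ(S) is the minimal σ ≥ 1 such that Q_n ⊆ σS, the homothetic copy of S with ratio σ and center at the centroid of S. In particular, ξ_n := min{ ξ(S) : S a nondegenerate n-dimensional simplex contained in Q_n } satisfies ξ_n ≥ n. -/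
lemma key_alpha (n : ℕ) (x : Fin (n + 1) → (Fin n → ℝ))
    (hx : AffineIndependent ℝ x)
    (hcube : convexHull ℝ (Set.range x) ⊆ Set.Icc 0 1)
    (σ : ℝ) (hσ : 0 < σ) (c : Fin n → ℝ)
    (hQ : Set.Icc 0 1 ⊆ (fun y => σ • y + c) '' convexHull ℝ (Set.range x)) :
    (n : ℝ) ≤ σ := by
  classical
  have hspan : affineSpan ℝ (Set.range x) = ⊤ :=
    hx.affineSpan_eq_top_iff_card_eq_finrank_add_one.mpr (by simp [Module.finrank_fin_fun])
  let b : AffineBasis (Fin (n + 1)) ℝ (Fin n → ℝ) := ⟨x, hx, hspan⟩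
  have hb : ⇑b = x := rfl
  -- nonnegativity of coordinates on the hull
  have hnn : ∀ p ∈ convexHull ℝ (Set.range x), ∀ i, 0 ≤ b.coord i p := by
    intro p hp i
    have h := b.convexHull_eq_nonneg_coord
    rw [hb] at h
    rw [h] at hp
    exact hp i
  -- membership of rescaled cube points
  have hmem : ∀ y ∈ Set.Icc (0 : Fin n → ℝ) 1, σ⁻¹ • (y - c) ∈ convexHull ℝ (Set.range x) := by
    intro y hy
    obtain ⟨s, hs, hsy⟩ := hQ hy
    have : σ⁻¹ • (y - c) = s := by
      rw [← hsy]; simp [smul_smul, inv_mul_cancel₀ hσ.ne']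
    rwa [this]
  have hadd : ∀ (i : Fin (n + 1)) (p v : Fin n → ℝ),
      b.coord i (v + p) = (b.coord i).linear v + b.coord i p := by
    intro i p v
    exact (b.coord i).map_vadd p v
  -- sum of linear parts is zero
  have hsumlin : ∀ v : Fin n → ℝ, ∑ i, (b.coord i).linear v = 0 := by
    intro v
    have h1 : ∑ i, b.coord i (v + 0) = 1 := b.sum_coord_apply_eq_one _
    have h0 : ∑ i, b.coord i (0 : Fin n → ℝ) = 1 := b.sum_coord_apply_eq_one _
    simp only [hadd] at h1
    rw [Finset.sum_add_distrib, h0] at h1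
    linarith
  -- representation of vectors
  have hrep : ∀ v : Fin n → ℝ, ∑ i, ((b.coord i).linear v) • x i = v := by
    intro v
    have h1 := b.linear_combination_coord_eq_self (v + 0)
    have h0 := b.linear_combination_coord_eq_self (0 : Fin n → ℝ)
    rw [hb] at h1 h0
    simp only [hadd, add_smul, Finset.sum_add_distrib] at h1
    rw [h0, add_zero, add_zero] at h1
    exact h1
  set e : Fin n → (Fin n → ℝ) := fun k => Pi.single k 1 with he
  have hone : ∀ k, ∑ i, ((b.coord i).linear (e k)) * (x i k) = 1 := by
    intro k
    have h := congrFun (hrep (e k)) k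
    simpa [he, Finset.sum_apply, Pi.single_apply] using h
  have hxik : ∀ i k, x i k ∈ Set.Icc (0:ℝ) 1 := by
    intro i k
    have h := hcube (subset_convexHull ℝ _ (Set.mem_range_self i))
    exact ⟨h.1 k, h.2 k⟩
  have hposk : ∀ k, (1:ℝ) ≤ ∑ i, max ((b.coord i).linear (e k)) 0 := by
    intro k
    rw [← hone k]
    apply Finset.sum_le_sum
    intro i _
    obtain ⟨h0, h1⟩ := hxik i k
    rcases le_or_gt 0 ((b.coord i).linear (e k)) with h | h
    · calc (b.coord i).linear (e k) * x i k ≤ (b.coord i).linear (e k) * 1 := by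
            exact mul_le_mul_of_nonneg_left h1 h
        _ ≤ max ((b.coord i).linear (e k)) 0 := by rw [mul_one]; exact le_max_left _ _
    · calc (b.coord i).linear (e k) * x i k ≤ 0 := mul_nonpos_of_nonpos_of_nonneg h.le h0
        _ ≤ max ((b.coord i).linear (e k)) 0 := le_max_right _ _
  have habs : ∀ k, (2:ℝ) ≤ ∑ i, |(b.coord i).linear (e k)| := by
    intro k
    have h0 := hsumlin (e k)
    have h2 : ∑ i, |(b.coord i).linear (e k)|
        = ∑ i, (2 * max ((b.coord i).linear (e k)) 0 - (b.coord i).linear (e k)) := by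
      apply Finset.sum_congr rfl
      intro i _
      rcases le_total 0 ((b.coord i).linear (e k)) with h | h
      · rw [abs_of_nonneg h, max_eq_left h]; ring
      · rw [abs_of_nonpos h, max_eq_right h]; ring
    rw [h2, Finset.sum_sub_distrib, h0, sub_zero, ← Finset.mul_sum]
    have := hposk k
    linarith
  -- the center and vertex argument
  set z : Fin n → ℝ := fun _ => 1/2 with hz
  have hcenter : ∀ i : Fin (n + 1),
      σ⁻¹ * ((1/2) * ∑ k, |(b.coord i).linear (e k)|) ≤ b.coord i (σ⁻¹ • (z - c)) := by
    intro i
    set ε : Fin n → ℝ := fun k => if 0 ≤ (b.coord i).linear (e k) then -(1/2) else 1/2 with hε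
    have hyIcc : z + ε ∈ Set.Icc (0 : Fin n → ℝ) 1 := by
      constructor
      · intro k
        simp only [Pi.add_apply, Pi.zero_apply, hz, hε]
        split <;> norm_num
      · intro k
        simp only [Pi.add_apply, Pi.one_apply, hz, hε]
        split <;> norm_num
    have hεdec : ε = ∑ k, (ε k) • e k := by
      funext j
      simp [he, Finset.sum_apply, Pi.single_apply]
    have hlinε : (b.coord i).linear ε = -(1/2) * ∑ k, |(b.coord i).linear (e k)| := by
      rw [hεdec, map_sum, Finset.mul_sum]
      apply Finset.sum_congr rfl
      intro k _
      rw [map_smul, smul_eq_mul]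
      rcases le_or_gt 0 ((b.coord i).linear (e k)) with h | h
      · simp only [hε, if_pos h, abs_of_nonneg h]
        try ring
      · simp only [hε, if_neg (not_le.mpr h), abs_of_neg h]
        try ring
    have h1 : 0 ≤ b.coord i (σ⁻¹ • (z + ε - c)) := hnn _ (hmem _ hyIcc) i
    have hsplit : σ⁻¹ • (z + ε - c) = σ⁻¹ • ε + σ⁻¹ • (z - c) := by
      rw [← smul_add]
      congr 1
      abel
    rw [hsplit, hadd, map_smul, smul_eq_mul, hlinε] at h1
    linarith
  have hsum1 : ∑ i, b.coord i (σ⁻¹ • (z - c)) = 1 := b.sum_coord_apply_eq_one _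
  have hbig2 : σ⁻¹ * ((1/2) * (2 * n)) ≤ ∑ i, b.coord i (σ⁻¹ • (z - c)) := by
    calc σ⁻¹ * ((1/2) * (2 * n))
        ≤ σ⁻¹ * ((1/2) * ∑ i, ∑ k, |(b.coord i).linear (e k)|) := by
          apply mul_le_mul_of_nonneg_left _ (by positivity)
          apply mul_le_mul_of_nonneg_left _ (by norm_num)
          rw [Finset.sum_comm]
          calc (2 : ℝ) * n = ∑ _k : Fin n, (2:ℝ) := by simp [mul_comm]
            _ ≤ ∑ k : Fin n, ∑ i, |(b.coord i).linear (e k)| :=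
                Finset.sum_le_sum fun k _ => habs k
      _ = ∑ i, σ⁻¹ * ((1/2) * ∑ k, |(b.coord i).linear (e k)|) := by
          rw [Finset.mul_sum, Finset.mul_sum]
      _ ≤ ∑ i, b.coord i (σ⁻¹ • (z - c)) := Finset.sum_le_sum fun i _ => hcenter i
  have hbig : σ⁻¹ * ((1/2) * (2 * n)) ≤ 1 := by linarith [hbig2, hsum1.le]
  have hσinv : σ * σ⁻¹ = 1 := mul_inv_cancel₀ hσ.ne'
  nlinarith [hbig, hσ]

lemma key_xi (n : ℕ) (y : Fin (n + 1) → (Fin n → ℝ))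
    (hy : AffineIndependent ℝ y)
    (hycube : convexHull ℝ (Set.range y) ⊆ Set.Icc 0 1)
    (σ : ℝ) (hσ1 : 1 ≤ σ)
    (hQ : Set.Icc 0 1 ⊆
      (AffineMap.homothety (Finset.centroid ℝ Finset.univ y) σ) ''
        convexHull ℝ (Set.range y)) :
    (n : ℝ) ≤ σ := by
  set c0 : Fin n → ℝ := Finset.centroid ℝ Finset.univ y with hc0
  have himg : ∀ p : Fin n → ℝ,
      σ • p + (c0 - σ • c0) = AffineMap.homothety c0 σ p := by
    intro p
    rw [AffineMap.homothety_apply]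
    simp only [vsub_eq_sub, vadd_eq_add, smul_sub]
    abel
  have hQ' : Set.Icc 0 1 ⊆
      (fun p => σ • p + (c0 - σ • c0)) '' convexHull ℝ (Set.range y) := by
    rwa [Set.image_congr' himg]
  exact key_alpha n y hy hycube σ (lt_of_lt_of_le one_pos hσ1) _ hQ'

/-- For a nondegenerate n-dimensional simplex `S ⊆ Q_n = [0,1]^n`
one has `α(S) ≥ n` and `ξ(S) ≥ n`, where `α(S)` is the least `σ > 0` with
`Q_n` contained in a translate of `σ·S`, and `ξ(S)` is the least `σ ≥ 1`
with `Q_n ⊆ σS`, the homothety of `S` with ratio `σ` centered at the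
centroid of `S`; consequently `ξ_n ≥ n`. -/
theorem alpha_xi_ge_n
    (n : ℕ) (x : Fin (n + 1) → (Fin n → ℝ))
    (hx : AffineIndependent ℝ x)
    (hcube : convexHull ℝ (Set.range x) ⊆ Set.Icc 0 1)
    (a : ℝ)
    (ha : IsLeast {σ : ℝ | 0 < σ ∧ ∃ c : Fin n → ℝ,
      Set.Icc 0 1 ⊆ (fun y => σ • y + c) '' convexHull ℝ (Set.range x)} a) :
    (n : ℝ) ≤ a ∧
    (∀ ξS : ℝ, IsLeast {σ : ℝ | 1 ≤ σ ∧ Set.Icc 0 1 ⊆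
        (AffineMap.homothety (Finset.centroid ℝ Finset.univ x) σ) ''
          convexHull ℝ (Set.range x)} ξS →
      (n : ℝ) ≤ ξS) ∧
    (∀ ξn : ℝ, IsLeast {ξ : ℝ | ∃ y : Fin (n + 1) → (Fin n → ℝ),
        AffineIndependent ℝ y ∧
        convexHull ℝ (Set.range y) ⊆ Set.Icc 0 1 ∧
        IsLeast {σ : ℝ | 1 ≤ σ ∧ Set.Icc 0 1 ⊆
          (AffineMap.homothety (Finset.centroid ℝ Finset.univ y) σ) ''
            convexHull ℝ (Set.range y)} ξ} ξn →
      (n : ℝ) ≤ ξn) := by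
  refine ⟨?_, ?_, ?_⟩
  · obtain ⟨⟨hapos, c, hc⟩, -⟩ := ha
    exact key_alpha n x hx hcube a hapos c hc
  · intro ξS hξ
    exact key_xi n x hx hcube ξS hξ.1.1 hξ.1.2
  · intro ξn hξ
    obtain ⟨y, hy, hycube, hle⟩ := hξ.1
    exact key_xi n y hy hycube ξn hle.1.1 hle.1.2
end
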